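/- arXiv:1203.1761 — 7 statements merged into one kernel-verified Lean document; each statement's English description precedes it below -/
import Mathlib

section
/- For every real number p ≥ 1, every proper ultrametric space embeds isometrically into ℓ_p, i.e., there exists a map f : X → ℓ_p such that ‖f(x) − f(y)‖_p = ρ(x,y) for all x, y ∈ X. -/
/-!
If weights `w i ≥ 0` on sets `S i` are such that the sets containing `x` but not `y` always have
total weight `dist x y ^ p`, then `x ↦ ((w i / 2) ^ (1 / p) * (1_{S i} x - 1_{S i} x₀))ᵢ` is an
isometry into `ℓ_p`: indicator differences lie in `{-1, 0, 1}`, and every pair is separated from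
both sides.

In an ultrametric space every point of a closed ball is a centre of it. Weight a ball `B` by the
Lebesgue measure of `{s ≥ 0 | B is a closed ball of radius s ^ (1 / p)}`; then, as `B` runs over
the balls containing `x` but not `y`, these sets partition `[0, dist x y ^ p)`. Properness makes
the distances from a point countable and attained, so only countably many balls separate two given
points, and by separability only countably many balls carry weight.
-/

open ENNReal Metric Set MeasureTheory Function

section Cut

variable {ι X : Type*} [PseudoMetricSpace X]

noncomputable def cutCoords (p : ℝ) (S : ι → Set X) (w : ι → ℝ) (x₀ x : X) : ι → ℝ :=
  fun i => (w i / 2) ^ p⁻¹ * ((S i).indicator 1 x - (S i).indicator 1 x₀)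

structure IsCutDecomposition (p : ℝ) (S : ι → Set X) (w : ι → ℝ) : Prop where
  nonneg : ∀ i, 0 ≤ w i
  hasSum : ∀ x y, HasSum ({i | x ∈ S i ∧ y ∉ S i}.indicator w) (dist x y ^ p)

namespace IsCutDecomposition

variable {p : ℝ} {S : ι → Set X} {w : ι → ℝ}

lemma subtype (h : IsCutDecomposition p S w) (C : Set ι)
    (hC : ∀ x y, support ({i | x ∈ S i ∧ y ∉ S i}.indicator w) ⊆ C) :
    IsCutDecomposition p (fun i : C => S i) (fun i : C => w i) where
  nonneg i := h.nonneg i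
  hasSum x y := (hasSum_subtype_iff_of_support_subset (hC x y)).2 (h.hasSum x y)

lemma extend {κ : Type*} (h : IsCutDecomposition p S w) {e : ι → κ} (he : Injective e) :
    IsCutDecomposition p (Function.extend e S fun _ => ∅) (Function.extend e w 0) where
  nonneg k := by
    by_cases hk : ∃ i, e i = k
    · obtain ⟨i, rfl⟩ := hk
      simpa [he.extend_apply] using h.nonneg i
    · simp [extend_apply' _ _ _ hk]
  hasSum x y := by
    set S' := Function.extend e S fun _ => ∅
    have hind : {k | x ∈ S' k ∧ y ∉ S' k}.indicator (Function.extend e w 0) =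
        Function.extend e ({i | x ∈ S i ∧ y ∉ S i}.indicator w) 0 := by
      funext k
      by_cases hk : ∃ i, e i = k
      · obtain ⟨i, rfl⟩ := hk
        classical
        simp only [S', indicator_apply, mem_ofPred_eq, he.extend_apply]
      · simp [extend_apply' _ _ _ hk]
    rw [hind, hasSum_extend_zero he]
    exact h.hasSum x y

lemma exists_nat (h : IsCutDecomposition p S w) {C : Set ι} (hC : C.Countable)
    (hsupp : ∀ x y, support ({i | x ∈ S i ∧ y ∉ S i}.indicator w) ⊆ C) :
    ∃ (S' : ℕ → Set X) (w' : ℕ → ℝ), IsCutDecomposition p S' w' := by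
  have := hC.to_subtype
  obtain ⟨e, he⟩ := exists_injective_nat C
  exact ⟨_, _, (h.subtype C hsupp).extend he⟩

lemma hasSum_abs_cutCoords_sub_rpow (h : IsCutDecomposition p S w) (hp : 0 < p) (x₀ x y : X) :
    HasSum (fun i => |cutCoords p S w x₀ x i - cutCoords p S w x₀ y i| ^ p) (dist x y ^ p) := by
  have hsymm := ((h.hasSum x y).add (h.hasSum y x)).div_const 2
  rw [dist_comm y x, add_self_div_two] at hsymm
  refine hsymm.congr_fun fun i => ?_
  have hsub : cutCoords p S w x₀ x i - cutCoords p S w x₀ y i =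
      (w i / 2) ^ p⁻¹ * ((S i).indicator 1 x - (S i).indicator 1 y) := by
    simp only [cutCoords]; ring
  have hw : 0 ≤ w i / 2 := div_nonneg (h.nonneg i) zero_le_two
  have hc : |(w i / 2) ^ p⁻¹| ^ p = w i / 2 := by
    rw [abs_of_nonneg (Real.rpow_nonneg hw _), Real.rpow_inv_rpow hw hp.ne']
  by_cases hx : x ∈ S i <;> by_cases hy : y ∈ S i <;>
    simp [hsub, hx, hy, hc, Real.zero_rpow hp.ne']

theorem exists_isometry_lp [Fact (1 ≤ ENNReal.ofReal p)] (h : IsCutDecomposition p S w) :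
    ∃ f : X → lp (fun _ : ι => ℝ) (ENNReal.ofReal p), Isometry f := by
  have hp : 0 < p := zero_lt_one.trans_le (ENNReal.one_le_ofReal.mp Fact.out)
  have hpq : (ENNReal.ofReal p).toReal = p := ENNReal.toReal_ofReal hp.le
  rcases isEmpty_or_nonempty X with _ | ⟨⟨x₀⟩⟩
  · exact ⟨isEmptyElim, fun x => isEmptyElim x⟩
  have hsum := h.hasSum_abs_cutCoords_sub_rpow hp x₀
  have hmem (x : X) : Memℓp (cutCoords p S w x₀ x) (ENNReal.ofReal p) :=
    memℓp_gen (by simpa [hpq, cutCoords] using (hsum x x₀).summable)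
  refine ⟨fun x => ⟨_, hmem x⟩, Isometry.of_dist_eq fun x y => ?_⟩
  have hnorm := lp.norm_rpow_eq_tsum (by rwa [hpq]) (⟨_, hmem x⟩ - ⟨_, hmem y⟩)
  rw [hpq] at hnorm
  simp only [lp.coeFn_sub, Pi.sub_apply, Real.norm_eq_abs] at hnorm
  rw [(hsum x y).tsum_eq] at hnorm
  rw [dist_eq_norm]
  exact (Real.rpow_left_inj (norm_nonneg _) dist_nonneg hp.ne').mp hnorm

end IsCutDecomposition

end Cut

section Ultrametric

variable {X : Type*} [PseudoMetricSpace X]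

def powRadii (p : ℝ) (B : Set X) : Set ℝ :=
  {s | 0 ≤ s ∧ ∃ z, closedBall z (s ^ p⁻¹) = B}

def separatingBalls (p : ℝ) (x y : X) : Set (Set X) :=
  {B | x ∈ B ∧ y ∉ B ∧ (powRadii p B).Nonempty}

lemma exists_closedBall_eq_closedBall_dist [ProperSpace X] (x : X) {r : ℝ} (hr : 0 ≤ r) :
    ∃ z, closedBall x r = closedBall x (dist x z) := by
  obtain ⟨z, hz, hmax⟩ := (isCompact_closedBall x r).exists_isMaxOn
    ⟨x, mem_closedBall_self hr⟩ (continuous_const.dist continuous_id).continuousOn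
  exact ⟨z, subset_antisymm (fun w hw => mem_closedBall'.2 (hmax hw))
    (closedBall_subset_closedBall (mem_closedBall'.1 hz))⟩

variable [IsUltrametricDist X] {p : ℝ}

lemma countable_range_dist [TopologicalSpace.SeparableSpace X] (x : X) :
    (range (dist x)).Countable := by
  obtain ⟨D, hDc, hD⟩ := TopologicalSpace.exists_countable_dense X
  refine ((hDc.image (dist x)).insert 0).mono ?_
  rintro _ ⟨y, rfl⟩
  rcases (dist_nonneg : 0 ≤ dist x y).eq_or_lt with h | h
  · exact .inl h.symm
  obtain ⟨d, hdD, hd⟩ := hD.exists_mem_open isOpen_ball ⟨y, mem_ball_self h⟩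
  refine .inr ⟨d, hdD, ?_⟩
  rw [IsUltrametricDist.dist_eq_max_of_dist_ne_dist x y d (mem_ball'.1 hd).ne',
    max_eq_left (mem_ball'.1 hd).le]

lemma closedBall_eq_of_mem_powRadii {B : Set X} {s : ℝ} (hs : s ∈ powRadii p B) {x : X}
    (hx : x ∈ B) : closedBall x (s ^ p⁻¹) = B := by
  obtain ⟨-, z, rfl⟩ := hs
  exact (IsUltrametricDist.closedBall_eq_of_mem hx).symm

lemma ordConnected_powRadii (hp : 0 ≤ p) (B : Set X) : (powRadii p B).OrdConnected := by
  refine ⟨fun s ⟨hs, z, hz⟩ t ht u ⟨hsu, hut⟩ =>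
    ⟨hs.trans hsu, z, subset_antisymm ?_ ?_⟩⟩
  · rw [← closedBall_eq_of_mem_powRadii ht (hz ▸ mem_closedBall_self (Real.rpow_nonneg hs _))]
    exact closedBall_subset_closedBall (Real.rpow_le_rpow (hs.trans hsu) hut (inv_nonneg.2 hp))
  · rw [← hz]
    exact closedBall_subset_closedBall (Real.rpow_le_rpow hs hsu (inv_nonneg.2 hp))

lemma lt_dist_rpow_of_mem_powRadii (hp : 0 < p) {B : Set X} {x y : X} (hx : x ∈ B) (hy : y ∉ B)
    {s : ℝ} (hs : s ∈ powRadii p B) : s < dist x y ^ p := by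
  rw [← Real.rpow_inv_lt_iff_of_pos hs.1 dist_nonneg hp]
  by_contra! h
  exact hy (closedBall_eq_of_mem_powRadii hs hx ▸ mem_closedBall'.2 h)

lemma pairwiseDisjoint_powRadii (x : X) : {B : Set X | x ∈ B}.PairwiseDisjoint (powRadii p) :=
  fun _ h₁ _ h₂ hne => disjoint_left.2 fun _ hs₁ hs₂ =>
    hne ((closedBall_eq_of_mem_powRadii hs₁ h₁).symm.trans
      (closedBall_eq_of_mem_powRadii hs₂ h₂))

lemma biUnion_separatingBalls_powRadii (hp : 0 < p) (x y : X) :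
    ⋃ B ∈ separatingBalls p x y, powRadii p B = Ico 0 (dist x y ^ p) := by
  ext s
  simp only [mem_iUnion, exists_prop]
  constructor
  · rintro ⟨B, ⟨hx, hy, -⟩, hs⟩
    exact ⟨hs.1, lt_dist_rpow_of_mem_powRadii hp hx hy hs⟩
  · rintro ⟨hs, hlt⟩
    have hsB : s ∈ powRadii p (closedBall x (s ^ p⁻¹)) := ⟨hs, x, rfl⟩
    refine ⟨_, ⟨mem_closedBall_self (Real.rpow_nonneg hs _), fun hy => ?_, _, hsB⟩, hsB⟩
    exact (mem_closedBall'.1 hy).not_gt ((Real.rpow_inv_lt_iff_of_pos hs dist_nonneg hp).2 hlt)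

lemma countable_separatingBalls [ProperSpace X] (x y : X) : (separatingBalls p x y).Countable := by
  refine ((countable_range_dist x).image (closedBall x)).mono ?_
  rintro B ⟨hx, -, s, hs⟩
  obtain ⟨z, hz⟩ := exists_closedBall_eq_closedBall_dist x (Real.rpow_nonneg hs.1 p⁻¹)
  exact ⟨dist x z, mem_range_self z, hz ▸ closedBall_eq_of_mem_powRadii hs hx⟩

lemma hasSum_measureReal_powRadii [ProperSpace X] (hp : 0 < p) (x y : X) :
    HasSum ({B | x ∈ B ∧ y ∉ B}.indicator fun B => volume.real (powRadii p B))
      (dist x y ^ p) := by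
  have hsupp : support ({B | x ∈ B ∧ y ∉ B}.indicator fun B => volume.real (powRadii p B)) ⊆
      separatingBalls p x y := by
    intro B hB
    obtain ⟨⟨hx, hy⟩, hw⟩ := indicator_apply_ne_zero.1 hB
    exact ⟨hx, hy, nonempty_iff_ne_empty.2 fun h => hw (by simp [h])⟩
  rw [← hasSum_subtype_iff_of_support_subset hsupp]
  have := (countable_separatingBalls (p := p) x y).to_subtype
  have hvol : ∑' B : separatingBalls p x y, volume (powRadii p (B : Set X)) =
      ENNReal.ofReal (dist x y ^ p) := by
    rw [← measure_biUnion (countable_separatingBalls x y)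
      ((pairwiseDisjoint_powRadii x).subset fun B hB => hB.1)
      fun B _ => (ordConnected_powRadii hp.le B).measurableSet,
      biUnion_separatingBalls_powRadii hp, Real.volume_Ico, sub_zero]
  have hfin : ∑' B : separatingBalls p x y, volume (powRadii p (B : Set X)) ≠ ∞ :=
    hvol ▸ ofReal_ne_top
  convert ENNReal.hasSum_toReal hfin using 1
  · funext B
    exact indicator_of_mem (s := {B : Set X | x ∈ B ∧ y ∉ B}) ⟨B.2.1, B.2.2.1⟩ _
  · rw [← ENNReal.tsum_toReal_eq (ENNReal.ne_top_of_tsum_ne_top hfin), hvol,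
      toReal_ofReal (Real.rpow_nonneg dist_nonneg p)]

lemma isCutDecomposition_powRadii [ProperSpace X] (hp : 0 < p) :
    IsCutDecomposition p (id : Set X → Set X) fun B => volume.real (powRadii p B) where
  nonneg _ := measureReal_nonneg
  hasSum := hasSum_measureReal_powRadii hp

lemma support_subset_biUnion_separatingBalls {D : Set X} (hD : Dense D) (x y : X) :
    support ({B | x ∈ B ∧ y ∉ B}.indicator fun B => volume.real (powRadii p B)) ⊆
      ⋃ d ∈ D, ⋃ d' ∈ D, separatingBalls p d d' := by
  intro B hB
  obtain ⟨⟨hx, hy⟩, hw⟩ := indicator_apply_ne_zero.1 hB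
  obtain ⟨s, hs, hs0⟩ : ∃ s ∈ powRadii p B, s ≠ 0 := by
    by_contra! h
    have hsub : (powRadii p B).Subsingleton := subsingleton_singleton.anti fun s hs => h s hs
    exact hw (by simp [measureReal_def, hsub.measure_zero])
  have hB : closedBall x (s ^ p⁻¹) = B := closedBall_eq_of_mem_powRadii hs hx
  have hr : s ^ p⁻¹ ≠ 0 := (Real.rpow_pos_of_pos (hs.1.lt_of_ne' hs0) _).ne'
  obtain ⟨d, hdB, hdD⟩ :=
    hD.inter_open_nonempty B (hB ▸ IsUltrametricDist.isOpen_closedBall x hr) ⟨x, hx⟩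
  obtain ⟨d', hd'B, hd'D⟩ :=
    hD.inter_open_nonempty Bᶜ (hB ▸ isClosed_closedBall.isOpen_compl) ⟨y, hy⟩
  exact mem_iUnion₂.2 ⟨d, hdD, mem_iUnion₂.2 ⟨d', hd'D, hdB, hd'B, s, hs⟩⟩

end Ultrametric

/-- Every proper ultrametric space embeds isometrically into `ℓ_p` for `p ≥ 1`. -/
theorem proper_ultrametric_embeds_into_lp (p : ℝ) (hp : 1 ≤ p)
    (X : Type*) [MetricSpace X] [IsUltrametricDist X] [ProperSpace X] :
    haveI : Fact ((1 : ℝ≥0∞) ≤ ENNReal.ofReal p) := ⟨ENNReal.one_le_ofReal.mpr hp⟩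
    ∃ f : X → lp (fun _ : ℕ => ℝ) (ENNReal.ofReal p), Isometry f := by
  have : Fact ((1 : ℝ≥0∞) ≤ ENNReal.ofReal p) := ⟨ENNReal.one_le_ofReal.mpr hp⟩
  obtain ⟨D, hDc, hD⟩ := TopologicalSpace.exists_countable_dense X
  have hcut := isCutDecomposition_powRadii (X := X) (zero_lt_one.trans_le hp)
  obtain ⟨S, w, h⟩ := hcut.exists_nat
    (hDc.biUnion fun d _ => hDc.biUnion fun d' _ => countable_separatingBalls d d')
    (support_subset_biUnion_separatingBalls hD)
  exact h.exists_isometry_lp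
end

section
/- For every real number p ≥ 1, every compact ultrametric space embeds isometrically into ℓ_p. -/
/-!
Only finitely many distances of a compact ultrametric space exceed any `ε > 0` (points in the
same `ε`-ball of a finite cover realise the same large distances), so all nonzero distances
lie in a strictly decreasing sequence `t k → 0`. For each `k`, "distance `< t k`" is an
equivalence relation whose classes are open balls, countably many of them; label them by `ℕ`.
Send `x` to the vector whose block `k` carries the weight `((t k ^ p - t (k + 1) ^ p) / 2) ^ p⁻¹`
at the label of the ball of `x`. If `dist x y = t m`, the two vectors differ exactly in the
blocks `k ≥ m`, each contributing `t k ^ p - t (k + 1) ^ p`, and these telescope to `t m ^ p`.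
-/

open ENNReal
open Filter Topology Set

section Order

variable {α : Type*} [LinearOrder α]

lemma exists_isGreatest_of_finite_inter_Ici {S : Set α} (hne : S.Nonempty)
    (hS : ∀ a ∈ S, (S ∩ Ici a).Finite) : ∃ g, IsGreatest S g := by
  obtain ⟨a, ha⟩ := hne
  obtain ⟨g, hg, hmax⟩ := exists_max_image (S ∩ Ici a) id (hS a ha) ⟨a, ha, le_rfl⟩
  refine ⟨g, hg.1, fun s hs => ?_⟩
  rcases le_total a s with has | hsa
  · exact hmax s ⟨hs, has⟩
  · exact hsa.trans hg.2

lemma exists_strictAnti_range_eq_of_finite_inter_Ici {S : Set α} (hinf : S.Infinite)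
    (hS : ∀ a ∈ S, (S ∩ Ici a).Finite) : ∃ t : ℕ → α, StrictAnti t ∧ range t = S := by
  have hnext : ∀ r ∈ S, ∃ g, IsGreatest (S ∩ Iio r) g := fun r hr =>
    exists_isGreatest_of_finite_inter_Ici
      ((hinf.sdiff (hS r hr)).nonempty.mono fun s hs => ⟨hs.1, not_le.1 fun h => hs.2 ⟨hs.1, h⟩⟩)
      fun a ha => (hS a ha.1).subset (inter_subset_inter_left _ inter_subset_left)
  choose! next hnext using hnext
  obtain ⟨g₀, hg₀⟩ := exists_isGreatest_of_finite_inter_Ici hinf.nonempty hS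
  set t : ℕ → α := fun k => next^[k] g₀
  have hsucc : ∀ k, t (k + 1) = next (t k) := fun k => Function.iterate_succ_apply' next k g₀
  have hmem : ∀ k, t k ∈ S := by
    intro k
    induction k with
    | zero => exact hg₀.1
    | succ k ih => rw [hsucc]; exact (hnext _ ih).1.1
  have hanti : StrictAnti t :=
    strictAnti_nat_of_succ_lt fun k => by rw [hsucc]; exact (hnext _ (hmem k)).1.2
  refine ⟨t, hanti, (range_subset_iff.2 hmem).antisymm fun s hs => ?_⟩
  have hbelow : ∃ k, t k < s := by
    by_contra! h
    exact infinite_range_of_injective hanti.injective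
      ((hS s hs).subset (range_subset_iff.2 fun k => ⟨hmem k, h k⟩))
  obtain ⟨k, hk⟩ : ∃ k, Nat.find hbelow = k + 1 :=
    Nat.exists_eq_succ_of_ne_zero fun h0 =>
      (hg₀.2 hs).not_gt (by have := Nat.find_spec hbelow; rwa [h0] at this)
  have hlt : t (k + 1) < s := hk ▸ Nat.find_spec hbelow
  have hle : s ≤ t k := not_lt.1 (Nat.find_min hbelow (by omega))
  refine ⟨k, le_antisymm (not_lt.1 fun hsk => ?_) hle⟩
  exact hlt.not_ge (hsucc k ▸ (hnext _ (hmem k)).2 ⟨hs, hsk⟩)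

end Order

lemma finite_range_inter_Ici_of_tendsto_zero {u : ℕ → ℝ} (hu : Tendsto u atTop (𝓝 0))
    {ε : ℝ} (hε : 0 < ε) : (range u ∩ Ici ε).Finite := by
  have : {n | ¬u n < ε}.Finite :=
    eventually_cofinite.1 (Nat.cofinite_eq_atTop ▸ hu.eventually (gt_mem_nhds hε))
  exact (this.image u).subset fun _ ⟨⟨n, hn⟩, hε'⟩ => ⟨n, not_lt.2 (hn ▸ hε'), hn⟩

lemma exists_strictAnti_tendsto_zero_subset_range {S : Set ℝ} (hS0 : S ⊆ Ioi 0)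
    (hS : ∀ ε > 0, (S ∩ Ici ε).Finite) :
    ∃ t : ℕ → ℝ, StrictAnti t ∧ (∀ k, 0 < t k) ∧ Tendsto t atTop (𝓝 0) ∧ S ⊆ range t := by
  -- padding `S` with the sequence `1 / (n + 1)` makes it infinite without spoiling `hS`
  set S' := S ∪ range fun n : ℕ => 1 / ((n : ℝ) + 1)
  have hpos : S' ⊆ Ioi 0 :=
    union_subset hS0 (range_subset_iff.2 fun _ => mem_Ioi.2 Nat.one_div_pos_of_nat)
  have hfin : ∀ ε > 0, (S' ∩ Ici ε).Finite := fun ε hε => by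
    rw [union_inter_distrib_right]
    exact (hS ε hε).union
      (finite_range_inter_Ici_of_tendsto_zero tendsto_one_div_add_atTop_nhds_zero_nat hε)
  have hinf : S'.Infinite :=
    (infinite_range_of_injective fun m n h => by simpa using h).mono subset_union_right
  obtain ⟨t, hanti, hrange⟩ :=
    exists_strictAnti_range_eq_of_finite_inter_Ici hinf fun a ha => hfin a (hpos ha)
  have htpos : ∀ k, 0 < t k := fun k => hpos (hrange ▸ mem_range_self k)
  refine ⟨t, hanti, htpos, tendsto_order.2 ⟨fun a ha => .of_forall fun k => ha.trans (htpos k),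
    fun ε hε => ?_⟩, hrange ▸ subset_union_left⟩
  rw [← Nat.cofinite_eq_atTop, eventually_cofinite]
  exact ((hfin ε hε).preimage hanti.injective.injOn).subset
    fun k hk => ⟨hrange ▸ mem_range_self k, not_lt.1 hk⟩

namespace IsUltrametricDist

variable {X : Type*} [PseudoMetricSpace X] [IsUltrametricDist X]

lemma dist_eq_of_dist_lt_of_dist_lt {x y a b : X} (ha : dist x a < dist x y)
    (hb : dist y b < dist x y) : dist a b = dist x y := by
  have hay : dist a y = dist x y := by
    rw [dist_eq_max_of_dist_ne_dist a x y (by rw [dist_comm]; exact ha.ne),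
      max_eq_right (by rw [dist_comm]; exact ha.le)]
  rw [dist_eq_max_of_dist_ne_dist a y b (by rw [hay]; exact hb.ne'), hay,
    max_eq_left (dist_comm y b ▸ hb.le)]

lemma finite_range_dist_inter_Ici [CompactSpace X] {ε : ℝ} (hε : 0 < ε) :
    (range (fun q : X × X => dist q.1 q.2) ∩ Ici ε).Finite := by
  obtain ⟨c, hc, hcover⟩ :=
    Metric.totallyBounded_iff.1 (isCompact_univ (X := X)).totallyBounded ε hε
  refine ((hc.prod hc).image fun q : X × X => dist q.1 q.2).subset ?_
  rintro _ ⟨⟨⟨x, y⟩, rfl⟩, hxy⟩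
  obtain ⟨a, ha, hxa⟩ := mem_iUnion₂.1 (hcover (mem_univ x))
  obtain ⟨b, hb, hyb⟩ := mem_iUnion₂.1 (hcover (mem_univ y))
  exact ⟨(a, b), ⟨ha, hb⟩, dist_eq_of_dist_lt_of_dist_lt
    ((Metric.mem_ball.1 hxa).trans_le hxy) ((Metric.mem_ball.1 hyb).trans_le hxy)⟩

lemma exists_nat_eq_iff_dist_lt [TopologicalSpace.SeparableSpace X] {r : ℝ} (hr : 0 < r) :
    ∃ ℓ : X → ℕ, ∀ x y, ℓ x = ℓ y ↔ dist x y < r := by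
  classical
  rcases isEmpty_or_nonempty X with hX | hX
  · exact ⟨isEmptyElim, isEmptyElim⟩
  set u := TopologicalSpace.denseSeq X
  have hu : ∀ x, ∃ n, dist x (u n) < r := fun x =>
    Metric.denseRange_iff.1 (TopologicalSpace.denseRange_denseSeq X) x r hr
  refine ⟨fun x => Nat.find (hu x), fun x y => ⟨fun h => ?_, fun h => Nat.find_congr' ?_⟩⟩
  · have hx := Nat.find_spec (hu x)
    rw [show Nat.find (hu x) = Nat.find (hu y) from h] at hx
    exact (dist_triangle_max x _ y).trans_lt (max_lt hx (dist_comm y _ ▸ Nat.find_spec (hu y)))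
  · intro n
    rw [← Metric.mem_ball', ← Metric.mem_ball', ball_eq_of_mem (Metric.mem_ball'.2 h)]

end IsUltrametricDist

lemma Antitone.hasSum_sub_succ {b : ℕ → ℝ} (hb : Antitone b) (hlim : Tendsto b atTop (𝓝 0)) :
    HasSum (fun k => b k - b (k + 1)) (b 0) := by
  rw [hasSum_iff_tendsto_nat_of_nonneg fun k => sub_nonneg.2 (hb k.le_succ)]
  simp_rw [Finset.sum_range_sub']
  simpa using tendsto_const_nhds.sub hlim

lemma Antitone.hasSum_ite_lt_sub_succ {b : ℕ → ℝ} (hb : Antitone b)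
    (hlim : Tendsto b atTop (𝓝 0)) (m : ℕ) :
    HasSum (fun k => if k < m then 0 else b k - b (k + 1)) (b m) := by
  rw [← hasSum_nat_add_iff' m, Finset.sum_eq_zero fun k hk => if_pos (Finset.mem_range.1 hk),
    sub_zero]
  have := (hb.comp_monotone fun _ _ h => Nat.add_le_add_right h m).hasSum_sub_succ
    (hlim.comp (tendsto_add_atTop_nat m))
  simpa [add_right_comm _ m 1] using this

lemma StrictAnti.hasSum_ite_lt_rpow_sub {t : ℕ → ℝ} (ht : StrictAnti t)
    (hlim : Tendsto t atTop (𝓝 0)) {p : ℝ} (hp : 0 < p) {d : ℝ} (hd : d ∈ insert 0 (range t)) :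
    HasSum (fun k => if d < t k then 0 else t k ^ p - t (k + 1) ^ p) (d ^ p) := by
  have hnonneg : ∀ k, 0 ≤ t k := fun k => ht.antitone.le_of_tendsto hlim k
  rcases hd with rfl | ⟨m, rfl⟩
  · simp [Real.zero_rpow hp.ne', fun k => (hnonneg (k + 1)).trans_lt (ht k.lt_succ_self)]
  · simp only [ht.lt_iff_gt]
    refine Antitone.hasSum_ite_lt_sub_succ (fun i j hij => ?_) ?_ m
    · exact Real.rpow_le_rpow (hnonneg j) (ht.antitone hij) hp.le
    · simpa [Real.zero_rpow hp.ne'] using hlim.rpow_const (Or.inr hp.le)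

def graphIndicator {ι κ : Type*} [DecidableEq κ] (w : ι → ℝ) (ℓ : ι → κ) : ι × κ → ℝ :=
  fun i => if i.2 = ℓ i.1 then w i.1 else 0

section graphIndicator

variable {ι κ : Type*} [DecidableEq κ]

lemma hasSum_graphIndicator {w : ι → ℝ} {s : ℝ} (h : HasSum w s) (ℓ : ι → κ) :
    HasSum (graphIndicator w ℓ) s := by
  refine (Function.Injective.hasSum_iff (g := fun i => (i, ℓ i))
    (fun i j h => (Prod.mk.inj h).1) fun i hi => if_neg ?_).1
      (by simpa [graphIndicator, Function.comp_def] using h)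
  exact fun h => hi ⟨i.1, Prod.ext rfl h.symm⟩

lemma abs_graphIndicator_sub_rpow {p : ℝ} (hp : 0 < p) (w : ι → ℝ) (ℓ ℓ' : ι → κ) (i : ι × κ) :
    |graphIndicator w ℓ i - graphIndicator w ℓ' i| ^ p =
      graphIndicator (fun k => if ℓ k = ℓ' k then 0 else |w k| ^ p) ℓ i +
      graphIndicator (fun k => if ℓ k = ℓ' k then 0 else |w k| ^ p) ℓ' i := by
  obtain ⟨k, n⟩ := i
  simp only [graphIndicator]
  by_cases hk : ℓ k = ℓ' k
  · simp [hk, Real.zero_rpow hp.ne']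
  · split_ifs <;> simp_all [Real.zero_rpow hp.ne']

lemma hasSum_abs_graphIndicator_sub_rpow {p : ℝ} (hp : 0 < p) (w : ι → ℝ) (ℓ ℓ' : ι → κ)
    {s : ℝ} (h : HasSum (fun k => if ℓ k = ℓ' k then 0 else |w k| ^ p) s) :
    HasSum (fun i => |graphIndicator w ℓ i - graphIndicator w ℓ' i| ^ p) (2 * s) := by
  simpa only [abs_graphIndicator_sub_rpow hp, two_mul] using
    (hasSum_graphIndicator h ℓ).add (hasSum_graphIndicator h ℓ')

end graphIndicator

lemma exists_isometry_lp_of_hasSum_norm_rpow {X ι E : Type*} [PseudoMetricSpace X]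
    [NormedAddCommGroup E] {p : ℝ≥0∞} [Fact (1 ≤ p)] (hp : p ≠ ∞) (F : X → ι → E)
    (hF : ∀ x y, HasSum (fun i => ‖F x i - F y i‖ ^ p.toReal) (dist x y ^ p.toReal)) :
    ∃ f : X → lp (fun _ : ι => E) p, Isometry f := by
  rcases isEmpty_or_nonempty X with hX | ⟨⟨x₀⟩⟩
  · exact ⟨isEmptyElim, fun x => isEmptyElim x⟩
  have hp0 : 0 < p.toReal := ENNReal.toReal_pos (zero_lt_one.trans_le Fact.out).ne' hp
  refine ⟨fun x => ⟨F x - F x₀, memℓp_gen (hF x x₀).summable⟩, .of_dist_eq fun x y => ?_⟩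
  rw [dist_eq_norm, lp.norm_eq_tsum_rpow hp0, one_div]
  simp only [lp.coeFn_sub, Pi.sub_apply, sub_sub_sub_cancel_right, (hF x y).tsum_eq]
  exact Real.rpow_rpow_inv dist_nonneg hp0.ne'

/-- Every compact ultrametric space embeds isometrically into `ℓ_p` for `p ≥ 1`. -/
theorem compact_ultrametric_embeds_into_lp (p : ℝ) (hp : 1 ≤ p)
    (X : Type*) [MetricSpace X] [IsUltrametricDist X] [CompactSpace X] :
    haveI : Fact ((1 : ℝ≥0∞) ≤ ENNReal.ofReal p) := ⟨ENNReal.one_le_ofReal.mpr hp⟩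
    ∃ f : X → lp (fun _ : ℕ => ℝ) (ENNReal.ofReal p), Isometry f := by
  have : Fact ((1 : ℝ≥0∞) ≤ ENNReal.ofReal p) := ⟨ENNReal.one_le_ofReal.mpr hp⟩
  have hp0 : 0 < p := one_pos.trans_le hp
  obtain ⟨t, ht, htpos, hlim, hdist⟩ := exists_strictAnti_tendsto_zero_subset_range
    (S := range (fun q : X × X => dist q.1 q.2) ∩ Ioi 0) inter_subset_right fun ε hε =>
      (IsUltrametricDist.finite_range_dist_inter_Ici hε).subset
        (inter_subset_inter_left _ inter_subset_left)
  choose ℓ hℓ using fun k => IsUltrametricDist.exists_nat_eq_iff_dist_lt (X := X) (htpos k)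
  set w : ℕ → ℝ := fun k => ((t k ^ p - t (k + 1) ^ p) / 2) ^ p⁻¹
  have hw : ∀ k, |w k| ^ p = (t k ^ p - t (k + 1) ^ p) / 2 := fun k => by
    have : t (k + 1) ^ p ≤ t k ^ p :=
      Real.rpow_le_rpow (htpos _).le (ht k.lt_succ_self).le hp0.le
    rw [abs_of_nonneg (by positivity), Real.rpow_inv_rpow (by linarith) hp0.ne']
  refine exists_isometry_lp_of_hasSum_norm_rpow ofReal_ne_top
    (fun x => graphIndicator w (ℓ · x) ∘ Nat.pairEquiv.symm) fun x y => ?_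
  have hd : dist x y ∈ insert 0 (range t) :=
    (eq_or_lt_of_le dist_nonneg).imp Eq.symm fun h => hdist ⟨⟨(x, y), rfl⟩, h⟩
  rw [toReal_ofReal hp0.le]
  refine (Nat.pairEquiv.symm.hasSum_iff (f := fun j =>
    |graphIndicator w (ℓ · x) j - graphIndicator w (ℓ · y) j| ^ p)).2 ?_
  have h := (ht.hasSum_ite_lt_rpow_sub hlim hp0 hd).div_const 2
  simp only [ite_div, zero_div, ← hw, ← hℓ] at h
  simpa [mul_div_cancel₀] using hasSum_abs_graphIndicator_sub_rpow hp0 w _ _ h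
end

section
/- Every proper ultrametric space embeds isometrically into c₀, the Banach space of real sequences converging to 0 with the supremum norm. -/
open Metric Set Filter Topology
open scoped Classical

section UltraAux

variable {X : Type*} [MetricSpace X] [IsUltrametricDist X]

/-- In an ultrametric space, points strictly closer to `z` than `c` is are at the same
distance from `c` as `z`. -/
private lemma ultra_eq {c z w : X} (h : dist z w < dist c z) : dist c w = dist c z := by
  have h1 : dist c w ≤ dist c z :=
    (IsUltrametricDist.dist_triangle_max c z w).trans (max_le le_rfl h.le)
  have h2 : dist c z ≤ dist c w := by
    by_contra hlt
    push_neg at hlt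
    have ht := IsUltrametricDist.dist_triangle_max c w z
    rw [dist_comm w z] at ht
    have hm : max (dist c w) (dist z w) < dist c z := max_lt hlt h
    exact absurd (lt_of_le_of_lt ht hm) (lt_irrefl _)
  linarith

/-- In a proper ultrametric space, only finitely many distances from a fixed point lie in
a compact interval bounded away from zero. -/
private lemma finite_distvals [ProperSpace X] (c : X) {a b : ℝ} (ha : 0 < a) :
    {s : ℝ | a ≤ s ∧ s ≤ b ∧ ∃ z : X, dist c z = s}.Finite := by
  set A : Set X := {z | a ≤ dist c z ∧ dist c z ≤ b} with hA
  have hcl : IsClosed A := by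
    have : A = (dist c) ⁻¹' (Icc a b) := by
      ext z; simp [hA, Icc, mem_preimage]
    rw [this]
    exact isClosed_Icc.preimage (Continuous.dist continuous_const continuous_id)
  have hsub : A ⊆ closedBall c b := by
    intro z hz
    rw [mem_closedBall, dist_comm]
    exact hz.2
  have hAc : IsCompact A := (isCompact_closedBall c b).of_isClosed_subset hcl hsub
  obtain ⟨t, ht⟩ := hAc.elim_finite_subcover (fun z : X => ball z (dist c z))
    (fun z => isOpen_ball)
    (by
      intro z hz
      exact mem_iUnion.2 ⟨z, mem_ball_self (lt_of_lt_of_le ha hz.1)⟩)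
  refine Set.Finite.subset ((t.finite_toSet).image (fun z => dist c z)) ?_
  rintro s ⟨hs1, hs2, z, rfl⟩
  have hzA : z ∈ A := ⟨hs1, hs2⟩
  have := ht hzA
  simp only [mem_iUnion, exists_prop] at this
  obtain ⟨z₀, hz₀t, hz₀⟩ := this
  rw [mem_ball] at hz₀
  have : dist c z = dist c z₀ := by
    rw [dist_comm z z₀] at hz₀
    exact ultra_eq hz₀
  exact ⟨z₀, hz₀t, this.symm⟩

/-- The set of positive distances from a point in a proper space is countable. -/
private lemma countable_distvals [ProperSpace X] (c : X) :
    {s : ℝ | 0 < s ∧ ∃ z : X, dist c z = s}.Countable := by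
  have hsub : {s : ℝ | 0 < s ∧ ∃ z : X, dist c z = s} ⊆
      ⋃ n : ℕ, {s : ℝ | 1/((n:ℝ)+1) ≤ s ∧ s ≤ (n:ℝ)+1 ∧ ∃ z : X, dist c z = s} := by
    rintro s ⟨hs0, z, hz⟩
    obtain ⟨n, hn⟩ := exists_nat_ge (max (1/s) s)
    have hn1 : 1/s ≤ (n:ℝ)+1 := le_trans (le_trans (le_max_left _ _) hn) (by linarith)
    have hn2 : s ≤ (n:ℝ)+1 := le_trans (le_trans (le_max_right _ _) hn) (by linarith)
    have hpos : (0:ℝ) < (n:ℝ)+1 := by positivity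
    exact mem_iUnion.2 ⟨n, (one_div_le hpos hs0).2 hn1, hn2, z, hz⟩
  exact Set.Countable.mono hsub
    (countable_iUnion fun n => ((finite_distvals c (by positivity)).countable))

/-- Deduplicated enumeration: keep only first occurrences, replacing repeats by `0`. -/
private noncomputable def tau (σ : ℕ → ℕ → ℝ) (n k : ℕ) : ℝ :=
  if ∀ j < k, σ n j ≠ σ n k then σ n k else 0

private lemma tau_eq_of_ne (σ : ℕ → ℕ → ℝ) {n k : ℕ} (h : tau σ n k ≠ 0) :
    tau σ n k = σ n k ∧ ∀ j < k, σ n j ≠ σ n k := by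
  unfold tau at h ⊢
  by_cases hc : ∀ j < k, σ n j ≠ σ n k
  · rw [if_pos hc]; exact ⟨rfl, hc⟩
  · rw [if_neg hc] at h; exact absurd rfl h

private lemma tau_inj (σ : ℕ → ℕ → ℝ) {n k k' : ℕ} (h : tau σ n k ≠ 0)
    (h' : tau σ n k' ≠ 0) (he : tau σ n k = tau σ n k') : k = k' := by
  obtain ⟨e1, f1⟩ := tau_eq_of_ne σ h
  obtain ⟨e2, f2⟩ := tau_eq_of_ne σ h'
  by_contra hne
  rcases lt_or_gt_of_ne hne with hlt | hlt
  · exact f2 k hlt (by rw [← e1, ← e2, he])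
  · exact f1 k' hlt (by rw [← e1, ← e2, he])

private lemma tau_cover (σ : ℕ → ℕ → ℝ) {n : ℕ} {s : ℝ} (h : ∃ k, σ n k = s) :
    ∃ k, tau σ n k = s := by
  classical
  refine ⟨Nat.find h, ?_⟩
  have hk : σ n (Nat.find h) = s := Nat.find_spec h
  have hfirst : ∀ j < Nat.find h, σ n j ≠ σ n (Nat.find h) := by
    intro j hj hcon
    exact (Nat.find_min h hj) (by rw [hcon, hk])
  unfold tau
  rw [if_pos hfirst, hk]

/-- The coordinate functions of the embedding. -/
private noncomputable def phi (c : ℕ → X) (σ : ℕ → ℕ → ℝ) (p : X) (n k : ℕ) (x : X) : ℝ :=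
  if 0 < tau σ n k ∧ ∀ m < n, tau σ n k ≤ dist (c n) (c m) then
    tau σ n k * ((if dist (c n) x < tau σ n k then (1:ℝ) else 0) -
      (if dist (c n) p < tau σ n k then (1:ℝ) else 0))
  else 0

private lemma phi_lipschitz (c : ℕ → X) (σ : ℕ → ℕ → ℝ) (p : X) (n k : ℕ) (x y : X) :
    |phi c σ p n k x - phi c σ p n k y| ≤ dist x y := by
  unfold phi
  by_cases h : 0 < tau σ n k ∧ ∀ m < n, tau σ n k ≤ dist (c n) (c m)
  · rw [if_pos h, if_pos h]
    set s := tau σ n k with hs_def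
    have hs : 0 < s := h.1
    have key : ∀ u v : X, dist (c n) u < s → s ≤ dist (c n) v → s ≤ dist u v := by
      intro u v hu hv
      have ht := IsUltrametricDist.dist_triangle_max (c n) u v
      rcases le_max_iff.1 ht with h1 | h1
      · linarith
      · linarith
    set A : ℝ := if dist (c n) p < s then (1:ℝ) else 0 with hA
    by_cases hx : dist (c n) x < s <;> by_cases hy : dist (c n) y < s
    · rw [if_pos hx, if_pos hy, sub_self, abs_zero]; exact dist_nonneg
    · rw [if_pos hx, if_neg hy]
      have hk := key x y hx (not_lt.1 hy)
      rw [show s * ((1:ℝ) - A) - s * ((0:ℝ) - A) = s by ring, abs_of_pos hs]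
      exact hk
    · rw [if_neg hx, if_pos hy]
      have hk := key y x hy (not_lt.1 hx)
      rw [show s * ((0:ℝ) - A) - s * ((1:ℝ) - A) = -s by ring, abs_neg, abs_of_pos hs]
      rw [dist_comm] at hk
      exact hk
    · rw [if_neg hx, if_neg hy, sub_self, abs_zero]; exact dist_nonneg
  · rw [if_neg h, if_neg h, sub_self, abs_zero]; exact dist_nonneg

private lemma phi_attain (c : ℕ → X) (hc : DenseRange c) (σ : ℕ → ℕ → ℝ)
    (hσ : ∀ n : ℕ, {s : ℝ | 0 < s ∧ ∃ z : X, dist (c n) z = s} = Set.range (σ n))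
    (p : X) {x y : X} (hne : x ≠ y) :
    ∃ n k, |phi c σ p n k x - phi c σ p n k y| = dist x y := by
  classical
  set s := dist x y with hs_def
  have hs0 : 0 < s := dist_pos.2 hne
  have hex : ∃ n, dist (c n) y < s := by
    obtain ⟨n, hn⟩ := (Metric.denseRange_iff.1 hc) y s hs0
    exact ⟨n, by rwa [dist_comm]⟩
  set N := Nat.find hex with hN_def
  have hNy : dist (c N) y < s := Nat.find_spec hex
  have hNx : dist (c N) x = s := by
    have h1 : dist y (c N) < dist x y := by rwa [dist_comm y (c N)]
    have := ultra_eq (c := x) (z := y) (w := c N) h1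
    rwa [dist_comm x (c N)] at this
  have hact : ∀ m < N, s ≤ dist (c N) (c m) := by
    intro m hm
    have hmy : s ≤ dist (c m) y := not_lt.1 (Nat.find_min hex hm)
    have h1 : dist y (c N) < dist (c m) y := by
      rw [dist_comm y (c N)]
      exact lt_of_lt_of_le hNy hmy
    have := ultra_eq (c := c m) (z := y) (w := c N) h1
    rw [dist_comm (c N) (c m), this]
    exact hmy
  have hmem : s ∈ Set.range (σ N) := by
    rw [← hσ N]; exact ⟨hs0, x, hNx⟩
  obtain ⟨k, htk⟩ := tau_cover σ hmem
  refine ⟨N, k, ?_⟩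
  have hcond : 0 < s ∧ ∀ m < N, s ≤ dist (c N) (c m) := ⟨hs0, hact⟩
  have hnx : ¬ dist (c N) x < s := by rw [hNx]; exact lt_irrefl s
  unfold phi
  rw [htk]
  rw [if_pos hcond, if_pos hcond, if_neg hnx, if_pos hNy]
  set A : ℝ := if dist (c N) p < s then (1:ℝ) else 0 with hA
  rw [show s * ((0:ℝ) - A) - s * ((1:ℝ) - A) = -s by ring, abs_neg, abs_of_pos hs0]

private lemma phi_finite [ProperSpace X] (c : ℕ → X) (σ : ℕ → ℕ → ℝ)
    (hσ_mem : ∀ n k, 0 < σ n k ∧ ∃ z : X, dist (c n) z = σ n k)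
    (p x : X) {ε : ℝ} (hε : 0 < ε) :
    {q : ℕ × ℕ | ε ≤ |phi c σ p q.1 q.2 x|}.Finite := by
  classical
  set S := dist x p with hS_def
  set K : Set X := closedBall x S ∪ closedBall p S with hK_def
  have hKc : IsCompact K := (isCompact_closedBall x S).union (isCompact_closedBall p S)
  -- extraction of data from a bad coordinate
  have hbad : ∀ n k, ε ≤ |phi c σ p n k x| →
      (0 < tau σ n k ∧ (∀ m < n, tau σ n k ≤ dist (c n) (c m)) ∧
        ε ≤ tau σ n k ∧ tau σ n k ≤ S ∧ c n ∈ K) := by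
    intro n k h
    unfold phi at h
    by_cases hcond : 0 < tau σ n k ∧ ∀ m < n, tau σ n k ≤ dist (c n) (c m)
    · rw [if_pos hcond] at h
      set s := tau σ n k with hs_def
      have hs0 : 0 < s := hcond.1
      by_cases hx : dist (c n) x < s <;> by_cases hp : dist (c n) p < s
      · rw [if_pos hx, if_pos hp, sub_self, mul_zero, abs_zero] at h; linarith
      · -- x in the ball, p out
        rw [if_pos hx, if_neg hp] at h
        rw [show s * ((1:ℝ) - 0) = s by ring, abs_of_pos hs0] at h
        have hsp : s ≤ dist (c n) p := not_lt.1 hp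
        have h1 : dist (c n) x < dist p (c n) := by
          rw [dist_comm p (c n)]
          exact lt_of_lt_of_le hx hsp
        have h2 : dist p x = dist p (c n) := ultra_eq (c := p) (z := c n) (w := x) h1
        have hsS : s ≤ S := by
          rw [hS_def, dist_comm x p, h2, dist_comm p (c n)]
          exact hsp
        refine ⟨hs0, hcond.2, h, hsS, Or.inl ?_⟩
        rw [mem_closedBall]
        exact le_trans hx.le hsS
      · -- p in the ball, x out
        rw [if_neg hx, if_pos hp] at h
        rw [show s * ((0:ℝ) - 1) = -s by ring, abs_neg, abs_of_pos hs0] at h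
        have hsx : s ≤ dist (c n) x := not_lt.1 hx
        have h1 : dist (c n) p < dist x (c n) := by
          rw [dist_comm x (c n)]
          exact lt_of_lt_of_le hp hsx
        have h2 : dist x p = dist x (c n) := ultra_eq (c := x) (z := c n) (w := p) h1
        have hsS : s ≤ S := by
          rw [hS_def, h2, dist_comm x (c n)]
          exact hsx
        refine ⟨hs0, hcond.2, h, hsS, Or.inr ?_⟩
        rw [mem_closedBall]
        exact le_trans hp.le hsS
      · rw [if_neg hx, if_neg hp, sub_self, mul_zero, abs_zero] at h; linarith
    · rw [if_neg hcond, abs_zero] at h; linarith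
  -- the set of bad first indices is finite
  set badN : Set ℕ := {n | ∃ k, ε ≤ |phi c σ p n k x|} with hbadN_def
  obtain ⟨t, ht⟩ := hKc.elim_finite_subcover (fun z : X => ball z (ε/2))
    (fun z => isOpen_ball)
    (fun z hz => mem_iUnion.2 ⟨z, mem_ball_self (by positivity)⟩)
  have hcenter : ∀ n ∈ badN, ∃ z ∈ t, c n ∈ ball z (ε/2) := by
    intro n hn
    obtain ⟨k, hk⟩ := hn
    have hcn : c n ∈ K := (hbad n k hk).2.2.2.2
    have := ht hcn
    simpa only [mem_iUnion, exists_prop] using this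
  have hnX : Nonempty X := ⟨x⟩
  choose! ctr hctr1 hctr2 using hcenter
  have hinj : Set.InjOn ctr badN := by
    intro n hn m hm he
    by_contra hne
    have hsep : ε ≤ dist (c n) (c m) := by
      rcases lt_or_gt_of_ne hne with hlt | hlt
      · obtain ⟨k, hk⟩ := hm
        obtain ⟨_, hact, hε', _, _⟩ := hbad m k hk
        have := hact n hlt
        rw [dist_comm (c m) (c n)] at this
        linarith
      · obtain ⟨k, hk⟩ := hn
        obtain ⟨_, hact, hε', _, _⟩ := hbad n k hk
        have := hact m hlt
        linarith
    have h1 : dist (c n) (ctr n) < ε/2 := by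
      have := hctr2 n hn
      rwa [mem_ball] at this
    have h2 : dist (c m) (ctr n) < ε/2 := by
      have := hctr2 m hm
      rw [mem_ball] at this
      rw [he]
      exact this
    have h3 := dist_triangle (c n) (ctr n) (c m)
    rw [dist_comm (ctr n) (c m)] at h3
    linarith
  have hbadN_fin : badN.Finite := by
    refine Set.Finite.of_finite_image (Set.Finite.subset t.finite_toSet ?_) hinj
    rintro z ⟨n, hn, rfl⟩
    exact hctr1 n hn
  -- for each n, finitely many bad k
  have hbadK : ∀ n : ℕ, {k : ℕ | ε ≤ |phi c σ p n k x|}.Finite := by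
    intro n
    have himg : (fun k => tau σ n k) '' {k : ℕ | ε ≤ |phi c σ p n k x|} ⊆
        {s : ℝ | ε ≤ s ∧ s ≤ S ∧ ∃ z : X, dist (c n) z = s} := by
      rintro s ⟨k, hk, rfl⟩
      obtain ⟨hpos, _, hε', hS', _⟩ := hbad n k hk
      have hne : tau σ n k ≠ 0 := ne_of_gt hpos
      obtain ⟨heq, _⟩ := tau_eq_of_ne σ hne
      refine ⟨hε', hS', ?_⟩
      show ∃ z : X, dist (c n) z = tau σ n k
      rw [heq]
      exact (hσ_mem n k).2
    have hinjk : Set.InjOn (fun k => tau σ n k) {k : ℕ | ε ≤ |phi c σ p n k x|} := by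
      intro k hk k' hk' he
      have h1 : tau σ n k ≠ 0 := ne_of_gt (hbad n k hk).1
      have h2 : tau σ n k' ≠ 0 := ne_of_gt (hbad n k' hk').1
      exact tau_inj σ h1 h2 he
    exact Set.Finite.of_finite_image
      (Set.Finite.subset (finite_distvals (c n) hε) himg) hinjk
  -- put it together
  refine Set.Finite.subset
    (Set.Finite.biUnion hbadN_fin
      (fun n _ => (Set.Finite.prod (finite_singleton n) (hbadK n)))) ?_
  intro q hq
  simp only [mem_iUnion, exists_prop]
  exact ⟨q.1, ⟨q.2, hq⟩, rfl, hq⟩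

end UltraAux

/-- Every proper ultrametric space embeds isometrically into `c₀`, the Banach space of
real sequences converging to zero with the supremum norm. -/
theorem proper_ultrametric_embeds_into_c0
    (X : Type*) [MetricSpace X] [IsUltrametricDist X] [ProperSpace X] :
    ∃ f : X → ZeroAtInftyContinuousMap ℕ ℝ, Isometry f := by
  classical
  rcases isEmpty_or_nonempty X with hX | hX
  · exact ⟨fun x => isEmptyElim x, fun x => isEmptyElim x⟩
  rcases subsingleton_or_nontrivial X with hS | hN
  · exact ⟨fun _ => 0, Isometry.of_dist_eq fun x y => by
      rw [Subsingleton.elim x y]; simp⟩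
  set c : ℕ → X := TopologicalSpace.denseSeq X with hc_def
  have hc : DenseRange c := TopologicalSpace.denseRange_denseSeq X
  set p : X := c 0 with hp_def
  have hσ' : ∀ n : ℕ, ∃ f : ℕ → ℝ,
      {s : ℝ | 0 < s ∧ ∃ z : X, dist (c n) z = s} = Set.range f := by
    intro n
    refine (countable_distvals (c n)).exists_eq_range ?_
    obtain ⟨z, hz⟩ := exists_ne (c n)
    exact ⟨dist (c n) z, dist_pos.2 (Ne.symm hz), z, rfl⟩
  choose σ hσ using hσ'
  have hσ_mem : ∀ n k, 0 < σ n k ∧ ∃ z : X, dist (c n) z = σ n k := by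
    intro n k
    have h : σ n k ∈ Set.range (σ n) := ⟨k, rfl⟩
    rw [← hσ n] at h
    exact h
  have hui : Function.Injective Nat.unpair := fun a b h => by
    rw [← Nat.pair_unpair a, ← Nat.pair_unpair b, h]
  have hzero : ∀ x : X, Tendsto (fun m : ℕ =>
      phi c σ p (Nat.unpair m).1 (Nat.unpair m).2 x) (cocompact ℕ) (𝓝 0) := by
    intro x
    rw [Filter.cocompact_eq_cofinite, Metric.tendsto_nhds]
    intro ε hε
    rw [Filter.eventually_cofinite]
    have hsub : {m : ℕ | ¬ dist (phi c σ p (Nat.unpair m).1 (Nat.unpair m).2 x) 0 < ε} ⊆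
        Nat.unpair ⁻¹' {q : ℕ × ℕ | ε ≤ |phi c σ p q.1 q.2 x|} := by
      intro m hm
      simp only [mem_setOf_eq, Real.dist_0_eq_abs, not_lt] at hm
      exact hm
    exact Set.Finite.subset
      (Set.Finite.preimage (hui.injOn) (phi_finite c σ hσ_mem p x hε)) hsub
  set F : X → ZeroAtInftyContinuousMap ℕ ℝ := fun x =>
    { toFun := fun m => phi c σ p (Nat.unpair m).1 (Nat.unpair m).2 x
      continuous_toFun := continuous_of_discreteTopology
      zero_at_infty' := hzero x } with hF_def
  have hcoe : ∀ (x y : X) (m : ℕ), (F x - F y) m =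
      phi c σ p (Nat.unpair m).1 (Nat.unpair m).2 x -
        phi c σ p (Nat.unpair m).1 (Nat.unpair m).2 y := by
    intro x y m
    simp [hF_def]
  refine ⟨F, Isometry.of_dist_eq fun x y => ?_⟩
  rw [dist_eq_norm]
  apply le_antisymm
  · rw [← ZeroAtInftyContinuousMap.norm_toBCF_eq_norm,
      BoundedContinuousFunction.norm_le dist_nonneg]
    intro m
    have h1 : ((F x - F y).toBCF) m = (F x - F y) m := rfl
    rw [h1, hcoe x y m, Real.norm_eq_abs]
    exact phi_lipschitz c σ p _ _ x y
  · rcases eq_or_ne x y with rfl | hne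
    · simp
    · obtain ⟨n, k, hnk⟩ := phi_attain c hc σ hσ p hne
      have h1 : ‖(F x - F y) (Nat.pair n k)‖ ≤ ‖F x - F y‖ := by
        rw [← ZeroAtInftyContinuousMap.norm_toBCF_eq_norm]
        exact BoundedContinuousFunction.norm_coe_le_norm ((F x - F y).toBCF) (Nat.pair n k)
      rw [hcoe x y (Nat.pair n k)] at h1
      simp only [Nat.unpair_pair] at h1
      rw [Real.norm_eq_abs, hnk] at h1
      exact h1
end

section
/- Every compact ultrametric space embeds isometrically into c₀, the Banach space of real sequences converging to 0 with the supremum norm. -/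
open Metric Filter Set Topology

section Aux

variable {X : Type*} [MetricSpace X] [IsUltrametricDist X]

private lemma ultra_ball_iff {x y s : X} {r : ℝ} (hxy : dist x y < r) :
    dist x s < r ↔ dist y s < r := by
  constructor <;> intro h
  · exact lt_of_le_of_lt (IsUltrametricDist.dist_triangle_max y x s)
      (max_lt (by rwa [dist_comm]) h)
  · exact lt_of_le_of_lt (IsUltrametricDist.dist_triangle_max x y s) (max_lt hxy h)

private lemma ultra_same_dist {x y x' y' : X} (h1 : dist x x' < dist x y)
    (h2 : dist y y' < dist x y) : dist x' y' = dist x y := by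
  apply le_antisymm
  · calc dist x' y' ≤ max (dist x' x) (dist x y') :=
          IsUltrametricDist.dist_triangle_max _ _ _
      _ ≤ max (dist x' x) (max (dist x y) (dist y y')) :=
          max_le_max le_rfl (IsUltrametricDist.dist_triangle_max _ _ _)
      _ ≤ dist x y := by
          rw [dist_comm x' x]
          exact max_le h1.le (max_le le_rfl h2.le)
  · have h3 := IsUltrametricDist.dist_triangle_max x x' y
    rcases le_max_iff.mp h3 with h | h
    · exact absurd h (not_le.mpr h1)
    have h4 := IsUltrametricDist.dist_triangle_max x' y' y
    rcases le_max_iff.mp (h.trans h4) with h5 | h5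
    · exact h5
    · rw [dist_comm y' y] at h5; exact absurd h5 (not_le.mpr h2)

private lemma ultra_finite_dists [CompactSpace X] {ε : ℝ} (hε : 0 < ε) :
    {r : ℝ | ε ≤ r ∧ ∃ x y : X, dist x y = r}.Finite := by
  set K : Set (X × X) := {p | ε ≤ dist p.1 p.2} with hK
  have hKc : IsCompact K := (isClosed_le continuous_const (by fun_prop)).isCompact
  have hcov : K ⊆ ⋃ p : K, ball (p : X × X).1 (dist (p : X × X).1 (p : X × X).2) ×ˢ
      ball (p : X × X).2 (dist (p : X × X).1 (p : X × X).2) := by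
    intro q hq
    refine mem_iUnion.mpr ⟨⟨q, hq⟩, ?_⟩
    have hr : (0 : ℝ) < dist q.1 q.2 := hε.trans_le hq
    simp [Set.mem_prod, mem_ball, dist_self, hr]
  obtain ⟨Tf, hTf⟩ := hKc.elim_finite_subcover _
    (fun p : K => isOpen_ball.prod isOpen_ball) hcov
  apply Set.Finite.subset (((Tf : Set K).toFinite).image
    (fun p : K => dist (p : X × X).1 (p : X × X).2))
  rintro r ⟨hr, x, y, hxy⟩
  have hxyK : (x, y) ∈ K := by simpa [hK, hxy] using hr
  obtain ⟨p, hpT, hp⟩ := mem_iUnion₂.mp (hTf hxyK)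
  obtain ⟨hp1, hp2⟩ := hp
  have h1 : dist (p : X × X).1 x < dist (p : X × X).1 (p : X × X).2 := by
    rw [dist_comm]; exact hp1
  have h2 : dist (p : X × X).2 y < dist (p : X × X).1 (p : X × X).2 := by
    rw [dist_comm]; exact hp2
  have heq := ultra_same_dist h1 h2
  exact ⟨p, hpT, by rw [← hxy, heq]⟩

end Aux

/-- Every compact ultrametric space embeds isometrically into `c₀`, the Banach space of
real sequences converging to zero with the supremum norm. -/
theorem compact_ultrametric_embeds_into_c0
    (X : Type*) [MetricSpace X] [IsUltrametricDist X] [CompactSpace X] :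
    ∃ f : X → ZeroAtInftyContinuousMap ℕ ℝ, Isometry f := by
  classical
  by_cases hD : ∃ x y : X, 0 < dist x y
  · obtain ⟨x₀, y₀, hxy₀⟩ := hD
    set D : Set ℝ := {r | 0 < r ∧ ∃ x y : X, dist x y = r} with hDdef
    have hDne : D.Nonempty := ⟨dist x₀ y₀, hxy₀, x₀, y₀, rfl⟩
    have hDcnt : D.Countable := by
      have hsub : D ⊆ ⋃ n : ℕ, {r : ℝ | 1 / (n + 1) ≤ r ∧ ∃ x y : X, dist x y = r} := by
        rintro r ⟨hr, hex⟩
        obtain ⟨n, hn⟩ := exists_nat_one_div_lt hr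
        exact mem_iUnion.mpr ⟨n, hn.le, hex⟩
      exact (Set.countable_iUnion fun n =>
        (ultra_finite_dists (by positivity)).countable).mono hsub
    obtain ⟨σ, hσ⟩ := hDcnt.exists_eq_range hDne
    have hT : ∀ r : ℝ, 0 < r → ∃ t : Finset X, ∀ x : X, ∃ s ∈ t, dist x s < r := by
      intro r hr
      obtain ⟨t, -, htf, hcov⟩ := finite_cover_balls_of_compact (isCompact_univ : IsCompact (Set.univ : Set X)) hr
      refine ⟨htf.toFinset, fun x => ?_⟩
      obtain ⟨s, hs, hx⟩ := mem_iUnion₂.mp (hcov (mem_univ x))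
      exact ⟨s, htf.mem_toFinset.mpr hs, mem_ball.mp hx⟩
    choose! T hTc using hT
    set g : X → ℕ × ℕ → ℝ := fun x i =>
      if (0 < σ i.1 ∧ (∀ m < i.1, σ m ≠ σ i.1) ∧ i.2 < ((T (σ i.1)).toList).length) ∧
          dist x (((T (σ i.1)).toList).getD i.2 x₀) < σ i.1
        then σ i.1 else 0 with hgdef
    have gval : ∀ (z : X) (n k : ℕ), g z (n, k) =
        if (0 < σ n ∧ (∀ m < n, σ m ≠ σ n) ∧ k < ((T (σ n)).toList).length) ∧
            dist z (((T (σ n)).toList).getD k x₀) < σ n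
          then σ n else 0 := fun _ _ _ => rfl
    -- coordinatewise bound
    have key1 : ∀ x y : X, ∀ i : ℕ × ℕ, dist (g x i) (g y i) ≤ dist x y := by
      rintro x y ⟨n, k⟩
      by_cases hQ : 0 < σ n ∧ (∀ m < n, σ m ≠ σ n) ∧ k < ((T (σ n)).toList).length
      · by_cases h1 : dist x (((T (σ n)).toList).getD k x₀) < σ n <;>
          by_cases h2 : dist y (((T (σ n)).toList).getD k x₀) < σ n
        · rw [gval, gval, if_pos ⟨hQ, h1⟩, if_pos ⟨hQ, h2⟩, dist_self]
          exact dist_nonneg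
        · have hge : σ n ≤ dist x y := by
            by_contra hlt
            exact h2 ((ultra_ball_iff (not_le.mp hlt)).mp h1)
          rw [gval, gval, if_pos ⟨hQ, h1⟩, if_neg (fun h => h2 h.2),
            Real.dist_eq, sub_zero, abs_of_pos hQ.1]
          exact hge
        · have hge : σ n ≤ dist x y := by
            by_contra hlt
            rw [dist_comm] at hlt
            exact h1 ((ultra_ball_iff (not_le.mp hlt)).mp h2)
          rw [gval, gval, if_neg (fun h => h1 h.2), if_pos ⟨hQ, h2⟩, dist_comm,
            Real.dist_eq, sub_zero, abs_of_pos hQ.1]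
          exact hge
        · rw [gval, gval, if_neg (fun h => h1 h.2), if_neg (fun h => h2 h.2), dist_self]
          exact dist_nonneg
      · rw [gval, gval, if_neg (fun h => hQ h.1), if_neg (fun h => hQ h.1), dist_self]
        exact dist_nonneg
    -- zero at infinity
    have key2 : ∀ x : X, ∀ ε : ℝ, 0 < ε → {i : ℕ × ℕ | ¬ dist (g x i) 0 < ε}.Finite := by
      intro x ε hε
      have hNfin : {n : ℕ | (0 < σ n ∧ ∀ m < n, σ m ≠ σ n) ∧ ε ≤ σ n}.Finite := by
        refine Set.Finite.of_finite_image (f := σ) ((ultra_finite_dists (X := X) hε).subset ?_) ?_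
        · rintro r ⟨n, hn, rfl⟩
          refine ⟨hn.2, ?_⟩
          have hmem : σ n ∈ D := hσ ▸ Set.mem_range_self n
          exact hmem.2
        · intro a ha b hb hab
          by_contra hne
          rcases lt_or_gt_of_ne hne with h | h
          · exact hb.1.2 a h hab
          · exact ha.1.2 b h hab.symm
      apply Set.Finite.subset (hNfin.biUnion
        (fun n _ => (Set.finite_singleton n).prod (Set.finite_Iio ((T (σ n)).toList).length)))
      rintro ⟨n, k⟩ hi
      simp only [mem_setOf_eq, not_lt] at hi
      by_cases hc : (0 < σ n ∧ (∀ m < n, σ m ≠ σ n) ∧ k < ((T (σ n)).toList).length) ∧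
          dist x (((T (σ n)).toList).getD k x₀) < σ n
      · have hval : g x (n, k) = σ n := by rw [gval]; exact if_pos hc
        have hεle : ε ≤ σ n := by
          rw [hval, Real.dist_eq, sub_zero, abs_of_pos hc.1.1] at hi
          exact hi
        refine Set.mem_biUnion (⟨⟨hc.1.1, hc.1.2.1⟩, hεle⟩ :
          n ∈ {n : ℕ | (0 < σ n ∧ ∀ m < n, σ m ≠ σ n) ∧ ε ≤ σ n}) ?_
        exact Set.mem_prod.mpr ⟨rfl, hc.1.2.2⟩
      · exfalso
        have hval : g x (n, k) = 0 := by rw [gval]; exact if_neg hc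
        rw [hval, dist_self] at hi
        exact absurd (hε.trans_le hi) (lt_irrefl 0)
    set e : ℕ ≃ ℕ × ℕ := (Denumerable.eqv (ℕ × ℕ)).symm with hedef
    have hzero : ∀ x : X, Tendsto (fun m : ℕ => g x (e m)) (cocompact ℕ) (𝓝 0) := by
      intro x
      rw [cocompact_eq_cofinite, Metric.tendsto_nhds]
      intro ε hε
      rw [eventually_cofinite]
      have heq : {m : ℕ | ¬ dist (g x (e m)) 0 < ε} = e ⁻¹' {i | ¬ dist (g x i) 0 < ε} := rfl
      rw [heq]
      exact (key2 x ε hε).preimage e.injective.injOn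
    set F : X → ZeroAtInftyContinuousMap ℕ ℝ := fun x =>
      ⟨⟨fun m => g x (e m), continuous_of_discreteTopology⟩, hzero x⟩ with hFdef
    refine ⟨F, Isometry.of_dist_eq fun x y => le_antisymm ?_ ?_⟩
    · rw [← ZeroAtInftyContinuousMap.dist_toBCF_eq_dist]
      refine (BoundedContinuousFunction.dist_le dist_nonneg).mpr fun m => ?_
      exact key1 x y (e m)
    · rcases eq_or_ne x y with rfl | hne
      · simp
      · have hr : 0 < dist x y := dist_pos.mpr hne
        have hmem : dist x y ∈ D := ⟨hr, x, y, rfl⟩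
        have hex : ∃ n, σ n = dist x y := by rw [hσ] at hmem; exact hmem
        set n₀ := Nat.find hex with hn₀def
        have hσn₀ : σ n₀ = dist x y := Nat.find_spec hex
        have hmin : ∀ m < n₀, σ m ≠ σ n₀ := fun m hm hc =>
          Nat.find_min hex hm (hc.trans hσn₀)
        obtain ⟨s, hsT, hsd⟩ := hTc (dist x y) hr x
        have hsl : s ∈ (T (dist x y)).toList := Finset.mem_toList.mpr hsT
        obtain ⟨⟨k, hk⟩, hget⟩ := List.mem_iff_get.mp hsl
        have hgetD : ((T (dist x y)).toList).getD k x₀ = s := by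
          rw [List.getD_eq_getElem _ _ hk, ← hget]
          simp [List.get_eq_getElem]
        have hgx : g x (n₀, k) = dist x y := by
          rw [gval, hσn₀, if_pos, ]
          refine ⟨⟨hr, fun m hm => ?_, hk⟩, ?_⟩
          · intro hc; exact hmin m hm (hc.trans hσn₀.symm)
          · rw [hgetD]; exact hsd
        have hys : ¬ dist y s < dist x y := by
          intro hlt
          have h3 := IsUltrametricDist.dist_triangle_max x s y
          rcases le_max_iff.mp h3 with h | h
          · exact absurd h (not_le.mpr hsd)
          · rw [dist_comm s y] at h
            exact absurd h (not_le.mpr hlt)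
        have hgy : g y (n₀, k) = 0 := by
          rw [gval, hσn₀, if_neg]
          intro hc
          apply hys
          rw [← hgetD]
          exact hc.2
        have h1 : (F x).toBCF (e.symm (n₀, k)) = g x (n₀, k) := by
          show g x (e (e.symm (n₀, k))) = g x (n₀, k)
          rw [Equiv.apply_symm_apply]
        have h2 : (F y).toBCF (e.symm (n₀, k)) = g y (n₀, k) := by
          show g y (e (e.symm (n₀, k))) = g y (n₀, k)
          rw [Equiv.apply_symm_apply]
        have hcoord : dist ((F x).toBCF (e.symm (n₀, k))) ((F y).toBCF (e.symm (n₀, k))) =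
            dist x y := by
          rw [h1, h2, hgx, hgy, Real.dist_eq, sub_zero, abs_of_pos hr]
        calc dist x y = _ := hcoord.symm
          _ ≤ dist (F x).toBCF (F y).toBCF :=
              BoundedContinuousFunction.dist_coe_le_dist _
          _ = dist (F x) (F y) := ZeroAtInftyContinuousMap.dist_toBCF_eq_dist
  · refine ⟨fun _ => 0, Isometry.of_dist_eq fun x y => ?_⟩
    push_neg at hD
    have hxy : dist x y = 0 := le_antisymm (hD x y) dist_nonneg
    simp [hxy]
end

section
/- For every real number p ≥ 1, every finite ultrametric space embeds isometrically into a finite-dimensional space ℓ_p^N for some natural number N, i.e., into ℝ^N equipped with the norm ‖a‖_p = (∑_{i=1}^N |a_i|^p)^{1/p}. -/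
/-!
Induct on the number of points. If `D > 0` is the largest distance in `X`, the open balls of
radius `D` partition `X` (ultrametricity) into strictly smaller classes, and points of different
classes are exactly `D` apart. Embed every class into the sphere of radius `ρ`, `ρ ^ p = D ^ p / 2`,
of its own block of coordinates, extended by zero outside the class: points of one class keep
their distance, points of different classes end up at distance `(ρ ^ p + ρ ^ p) ^ (1 / p) = D`.
The classes can be given a common radius because one extra constant coordinate raises the radius
of a spherical embedding to any larger value.
-/

open ENNReal

namespace PiLp

variable {p : ℝ≥0∞} {ι : Type*} [Fintype ι]

theorem norm_rpow_eq_sum {β : ι → Type*} [∀ i, SeminormedAddCommGroup (β i)]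
    (hp : 0 < p.toReal) (f : PiLp p β) : ‖f‖ ^ p.toReal = ∑ i, ‖f i‖ ^ p.toReal := by
  rw [norm_eq_sum hp, one_div, Real.rpow_inv_rpow (by positivity) hp.ne']

theorem dist_rpow_eq_sum {β : ι → Type*} [∀ i, PseudoMetricSpace (β i)]
    (hp : 0 < p.toReal) (f g : PiLp p β) :
    dist f g ^ p.toReal = ∑ i, dist (f i) (g i) ^ p.toReal := by
  rw [dist_eq_sum hp, one_div, Real.rpow_inv_rpow (by positivity) hp.ne']

end PiLp

def EmbedsInLpSphere (p : ℝ≥0∞) [Fact (1 ≤ p)] (X : Type*) [PseudoMetricSpace X] (r : ℝ) :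
    Prop :=
  ∃ (N : ℕ) (f : X → PiLp p (fun _ : Fin N => ℝ)), Isometry f ∧ ∀ x, ‖f x‖ = r

namespace EmbedsInLpSphere

variable {p : ℝ≥0∞} [Fact (1 ≤ p)] {X : Type*} [PseudoMetricSpace X] {r : ℝ}

theorem of_piLp {ι : Type*} [Fintype ι] (f : X → PiLp p (fun _ : ι => ℝ)) (hf : Isometry f)
    (hr : ∀ x, ‖f x‖ = r) : EmbedsInLpSphere p X r := by
  let e := LinearIsometryEquiv.piLpCongrLeft p ℝ ℝ (Fintype.equivFin ι)
  exact ⟨_, e ∘ f, e.isometry.comp hf, fun x => (e.norm_map _).trans (hr x)⟩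

theorem of_forall_dist_eq_zero (h : ∀ x y : X, dist x y = 0) : EmbedsInLpSphere p X 0 :=
  ⟨0, fun _ => 0, Isometry.of_dist_eq fun x y => by rw [dist_self, h], fun _ => norm_zero⟩

theorem mono (hp : 0 < p.toReal) (h : EmbedsInLpSphere p X r) (hr : 0 ≤ r) {s : ℝ}
    (hrs : r ≤ s) : EmbedsInLpSphere p X s := by
  obtain ⟨N, f, hf, hfr⟩ := h
  set t := (s ^ p.toReal - r ^ p.toReal) ^ p.toReal⁻¹
  have ht : ‖t‖ ^ p.toReal = s ^ p.toReal - r ^ p.toReal := by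
    have : r ^ p.toReal ≤ s ^ p.toReal := by gcongr
    rw [Real.norm_of_nonneg (by positivity), Real.rpow_inv_rpow (by linarith) hp.ne']
  let F : X → PiLp p (fun _ : Fin (N + 1) => ℝ) := fun x => WithLp.toLp p (Fin.cons t (f x))
  refine ⟨N + 1, F, Isometry.of_dist_eq fun x y => ?_, fun x => ?_⟩
  · rw [← Real.rpow_left_inj dist_nonneg dist_nonneg hp.ne', PiLp.dist_rpow_eq_sum hp,
      Fin.sum_univ_succ, ← hf.dist_eq, PiLp.dist_rpow_eq_sum hp]
    simp [F, Real.zero_rpow hp.ne']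
  · rw [← Real.rpow_left_inj (norm_nonneg _) (hr.trans hrs) hp.ne', PiLp.norm_rpow_eq_sum hp,
      Fin.sum_univ_succ]
    have hfx : ∑ i, ‖f x i‖ ^ p.toReal = r ^ p.toReal := by
      rw [← hfr x, PiLp.norm_rpow_eq_sum hp]
    simp only [F, Fin.cons_zero, Fin.cons_succ, ht, hfx]
    ring

theorem of_fibers (hp : 0 < p.toReal) {Q : Type*} [Finite Q] (π : X → Q) {D ρ : ℝ}
    (hρ : 0 ≤ ρ) (hDρ : D ^ p.toReal = 2 * ρ ^ p.toReal)
    (hπ : ∀ x y, π x ≠ π y → dist x y = D) (h : ∀ q, EmbedsInLpSphere p {x // π x = q} ρ) :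
    EmbedsInLpSphere p X ρ := by
  classical
  have := Fintype.ofFinite Q
  choose N f hf hfρ using h
  let g (q : Q) (x : X) : PiLp p (fun _ : Fin (N q) => ℝ) :=
    if hx : π x = q then f q ⟨x, hx⟩ else 0
  have hg_zero {x : X} {q : Q} (hx : π x ≠ q) : g q x = 0 := dif_neg hx
  have hg_norm (x : X) : ∑ q, ‖g q x‖ ^ p.toReal = ρ ^ p.toReal := by
    rw [Finset.sum_eq_single (π x) (fun q _ hq => by simp [hg_zero (Ne.symm hq),
      Real.zero_rpow hp.ne']) (by simp)]
    simp [g, hfρ]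
  let G (x : X) : PiLp p (fun q => PiLp p (fun _ : Fin (N q) => ℝ)) := WithLp.toLp p (g · x)
  have hG : Isometry G := Isometry.of_dist_eq fun x y => by
    rw [← Real.rpow_left_inj dist_nonneg dist_nonneg hp.ne', PiLp.dist_rpow_eq_sum hp]
    by_cases hxy : π x = π y
    · rw [Finset.sum_eq_single (π x) (fun q _ hq => by simp [G, hg_zero (Ne.symm hq),
        hg_zero (hxy ▸ Ne.symm hq), Real.zero_rpow hp.ne']) (by simp)]
      simp only [G, g, dif_pos hxy.symm, dif_pos rfl]
      rw [(hf _).dist_eq, Subtype.dist_eq]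
    · have hsplit (q : Q) :
          dist (g q x) (g q y) ^ p.toReal = ‖g q x‖ ^ p.toReal + ‖g q y‖ ^ p.toReal := by
        by_cases hx : π x = q
        · simp [hg_zero (x := y) (hx ▸ Ne.symm hxy), Real.zero_rpow hp.ne']
        · simp [hg_zero hx, Real.zero_rpow hp.ne']
      simp only [G, hsplit, Finset.sum_add_distrib, hg_norm, hπ x y hxy, hDρ]
      ring
  refine of_piLp ((LinearIsometryEquiv.piLpCurry ℝ p (fun _ _ => ℝ)).symm ∘ G)
    ((LinearIsometryEquiv.isometry _).comp hG) fun x => ?_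
  rw [Function.comp_apply, LinearIsometryEquiv.norm_map,
    ← Real.rpow_left_inj (norm_nonneg _) hρ hp.ne', PiLp.norm_rpow_eq_sum hp]
  exact hg_norm x

end EmbedsInLpSphere

theorem IsUltrametricDist.ball_eq_ball_iff {X : Type*} [PseudoMetricSpace X]
    [IsUltrametricDist X] {x y : X} {D : ℝ} (hD : 0 < D) :
    Metric.ball x D = Metric.ball y D ↔ dist x y < D := by
  refine ⟨fun h => ?_, fun h => IsUltrametricDist.ball_eq_of_mem (Metric.mem_ball'.mpr h)⟩
  rw [dist_comm, ← Metric.mem_ball, h]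
  exact Metric.mem_ball_self hD

theorem IsUltrametricDist.embedsInLpSphere {p : ℝ≥0∞} [Fact (1 ≤ p)] (hp : 0 < p.toReal)
    {X : Type*} [PseudoMetricSpace X] [IsUltrametricDist X] [Finite X] {r : ℝ} (hr : 0 ≤ r)
    (hX : ∀ x y : X, dist x y ^ p.toReal ≤ 2 * r ^ p.toReal) : EmbedsInLpSphere p X r := by
  induction hn : Nat.card X using Nat.strong_induction_on generalizing X r with
  | _ n ih =>
  by_cases h₀ : ∀ x y : X, dist x y = 0
  · exact (EmbedsInLpSphere.of_forall_dist_eq_zero h₀).mono hp le_rfl hr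
  push Not at h₀
  obtain ⟨x₀, y₀, hxy₀⟩ := h₀
  have : Nonempty (X × X) := ⟨(x₀, y₀)⟩
  obtain ⟨⟨a, b⟩, hab⟩ := Finite.exists_max fun z : X × X => dist z.1 z.2
  set D := dist a b
  have hD : 0 < D := (dist_nonneg.lt_of_ne hxy₀.symm).trans_le (hab (x₀, y₀))
  set ρ := (D ^ p.toReal / 2) ^ p.toReal⁻¹
  have hρ : 0 ≤ ρ := by positivity
  have hDρ : D ^ p.toReal = 2 * ρ ^ p.toReal := by
    rw [Real.rpow_inv_rpow (by positivity) hp.ne']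
    ring
  have hsep (x y : X) (hxy : Metric.ball x D ≠ Metric.ball y D) : dist x y = D :=
    (hab (x, y)).antisymm (not_lt.mp ((ball_eq_ball_iff hD).not.mp hxy))
  have hfib (q : Set X) : EmbedsInLpSphere p {x // Metric.ball x D = q} ρ := by
    have hcard : Nat.card {x // Metric.ball x D = q} < n := by
      by_cases ha : Metric.ball a D = q
      · refine hn ▸ Finite.card_subtype_lt (x := b) fun hb => ?_
        exact (ball_eq_ball_iff hD).mp (ha.trans hb.symm) |>.ne rfl
      · exact hn ▸ Finite.card_subtype_lt ha
    refine ih _ hcard hρ (fun x y => ?_) rfl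
    rw [← hDρ, Subtype.dist_eq]
    gcongr
    exact hab (x, y)
  have hρr : ρ ≤ r := by
    rw [← Real.rpow_le_rpow_iff hρ hr hp]
    linarith [hX a b]
  exact (EmbedsInLpSphere.of_fibers hp _ hρ hDρ hsep hfib).mono hp hρ hρr

/-- For `p ≥ 1`, every finite ultrametric space embeds isometrically into `ℓ_p^N`
(that is, `ℝ^N` with the `p`-norm) for some natural number `N`. -/
theorem finite_ultrametric_embeds_into_finite_dimensional_lp (p : ℝ) (hp : 1 ≤ p)
    (X : Type*) [MetricSpace X] [IsUltrametricDist X] [Finite X] :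
    haveI : Fact ((1 : ℝ≥0∞) ≤ ENNReal.ofReal p) := ⟨ENNReal.one_le_ofReal.mpr hp⟩
    ∃ (N : ℕ) (f : X → PiLp (ENNReal.ofReal p) (fun _ : Fin N => ℝ)), Isometry f := by
  have : Fact ((1 : ℝ≥0∞) ≤ ENNReal.ofReal p) := ⟨ENNReal.one_le_ofReal.mpr hp⟩
  have hp' : 0 < (ENNReal.ofReal p).toReal := by
    rw [ENNReal.toReal_ofReal (by linarith)]
    linarith
  set d := Metric.diam (Set.univ : Set X)
  have hd : 0 ≤ d := Metric.diam_nonneg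
  obtain ⟨N, f, hf, -⟩ := IsUltrametricDist.embedsInLpSphere hp' hd fun x y => calc
    dist x y ^ (ENNReal.ofReal p).toReal ≤ d ^ (ENNReal.ofReal p).toReal :=
      Real.rpow_le_rpow dist_nonneg
        (Metric.dist_le_diam_of_mem Set.finite_univ.isBounded trivial trivial) hp'.le
    _ ≤ 2 * d ^ (ENNReal.ofReal p).toReal := by
      linarith [Real.rpow_nonneg hd (ENNReal.ofReal p).toReal]
  exact ⟨N, f, hf⟩
end

section
/- Let (X, ρ) be a compact ultrametric space with diameter r₀ = diam X > 0, and consider the equivalence relation x ∼ y ⟺ ρ(x,y) < r₀. Then every equivalence class of ∼ is a closed ball in X whose diameter is strictly less than r₀. -/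
/-!
The class of `x` is the open ball `B = ball x r₀`. In an ultrametric space open balls are
closed, so `B` is compact and its diameter is attained by two points `a, b ∈ B`; then
`dist a b ≤ max (dist a x) (dist x b) < r₀`. Once `diam B < r₀`, the ball `B` coincides with
the closed ball `closedBall x (diam B)`.
-/

open Metric

theorem IsCompact.exists_dist_eq_diam {X : Type*} [PseudoMetricSpace X] {s : Set X}
    (hs : IsCompact s) (hne : s.Nonempty) : ∃ a ∈ s, ∃ b ∈ s, diam s = dist a b := by
  obtain ⟨⟨a, b⟩, ⟨ha, hb⟩, hmax⟩ :=
    (hs.prod hs).exists_isMaxOn (hne.prod hne) continuous_dist.continuousOn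
  refine ⟨a, ha, b, hb, le_antisymm ?_ (dist_le_diam_of_mem hs.isBounded ha hb)⟩
  exact diam_le_of_forall_dist_le dist_nonneg fun y hy z hz => hmax (Set.mk_mem_prod hy hz)

theorem ball_eq_closedBall_diam_of_diam_lt {X : Type*} [PseudoMetricSpace X] {x : X} {r : ℝ}
    (hd : diam (ball x r) < r) : ball x r = closedBall x (diam (ball x r)) := by
  ext y
  refine ⟨fun hy => ?_, fun hy => lt_of_le_of_lt hy hd⟩
  have hr : 0 < r := pos_of_mem_ball hy
  exact dist_le_diam_of_mem isBounded_ball hy (mem_ball_self hr)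

theorem IsUltrametricDist.diam_ball_lt {X : Type*} [PseudoMetricSpace X] [IsUltrametricDist X]
    {x : X} {r : ℝ} (hr : 0 < r) (hB : IsCompact (ball x r)) : diam (ball x r) < r := by
  obtain ⟨a, ha, b, hb, hab⟩ := hB.exists_dist_eq_diam ⟨x, mem_ball_self hr⟩
  rw [hab]
  calc dist a b ≤ max (dist a x) (dist x b) := IsUltrametricDist.dist_triangle_max a x b
    _ < r := max_lt ha (mem_ball'.mp hb)

/-- In a compact ultrametric space `X` of diameter `r₀ > 0`, every equivalence class of
the relation `x ∼ y ↔ ρ(x,y) < r₀` is a closed ball of diameter strictly less than `r₀`. -/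
theorem compact_ultrametric_diam_rel_classes_are_closed_balls
    (X : Type*) [MetricSpace X] [IsUltrametricDist X] [CompactSpace X]
    (h : 0 < Metric.diam (Set.univ : Set X)) :
    ∀ x : X, ∃ (c : X) (r : ℝ),
      {y : X | dist x y < Metric.diam (Set.univ : Set X)} = Metric.closedBall c r ∧
      Metric.diam {y : X | dist x y < Metric.diam (Set.univ : Set X)}
        < Metric.diam (Set.univ : Set X) := by
  intro x
  have hclass : {y : X | dist x y < diam (Set.univ : Set X)} = ball x (diam (Set.univ : Set X)) :=
    Set.ext fun _ => mem_ball'.symm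
  have hlt := IsUltrametricDist.diam_ball_lt h (IsUltrametricDist.isClosed_ball x _).isCompact
  rw [hclass]
  exact ⟨x, _, ball_eq_closedBall_diam_of_diam_lt hlt, hlt⟩
end

section
/- Fix D ≥ 1. If a compact metric space S embeds with distortion D into some ultrametric space, then S embeds with distortion D into c₀. -/
open Filter Metric Topology

section Aux

variable {S : Type*}

/-- distance values between points of the dense sequence, indexed by an encoded pair -/
private def Tval (ρ : S → S → ℝ) (a : ℕ → S) (p : ℕ) : ℝ :=
  ρ (a p.unpair.1) (a p.unpair.2)

/-- the condition for a nonzero coordinate: `m` encodes `(p, n)` where `p` is the minimal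
encoding of a positive distance value `t`, and `n` is the minimal index with `a n` in the
open `t`-cluster of `x`. -/
private def condP (ρ : S → S → ℝ) (a : ℕ → S) (x : S) (m : ℕ) : Prop :=
  0 < Tval ρ a m.unpair.1 ∧
  (∀ q < m.unpair.1, Tval ρ a q ≠ Tval ρ a m.unpair.1) ∧
  ρ x (a m.unpair.2) < Tval ρ a m.unpair.1 ∧
  ∀ j < m.unpair.2, ¬ ρ x (a j) < Tval ρ a m.unpair.1

open Classical in
private noncomputable def vval (ρ : S → S → ℝ) (a : ℕ → S) (x : S) (m : ℕ) : ℝ :=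
  if condP ρ a x m then Tval ρ a m.unpair.1 else 0

private lemma ultra_embed_c0
    (S : Type*) [MetricSpace S] [CompactSpace S] [Nonempty S]
    (ρ : S → S → ℝ)
    (hsymm : ∀ x y, ρ x y = ρ y x)
    (hself : ∀ x, ρ x x = 0)
    (hstrong : ∀ x y z, ρ x z ≤ max (ρ x y) (ρ y z))
    (C : ℝ) (hC : 0 < C)
    (hub : ∀ x y, ρ x y ≤ C * dist x y)
    (hpos : ∀ x y, x ≠ y → 0 < ρ x y) :
    ∃ g : S → ZeroAtInftyContinuousMap ℕ ℝ, ∀ x y, dist (g x) (g y) = ρ x y := by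
  classical
  have hnonneg : ∀ x y, 0 ≤ ρ x y := by
    intro x y
    have h1 := hstrong x y x
    rw [hself, hsymm y x, max_self] at h1
    exact h1
  -- the isoceles principle
  have hiso : ∀ u w z : S, ρ u w < ρ u z → ρ w z = ρ u z := by
    intro u w z h
    refine le_antisymm ?_ ?_
    · have h2 := hstrong w u z
      rwa [hsymm w u, max_eq_right h.le] at h2
    · have h2 := hstrong u w z
      rcases max_cases (ρ u w) (ρ w z) with ⟨he, _⟩ | ⟨he, _⟩
      · rw [he] at h2; linarith
      · rwa [he] at h2
  obtain ⟨a, ha⟩ := TopologicalSpace.exists_dense_seq S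
  -- density in ρ
  have hdense : ∀ (x : S) (ε : ℝ), 0 < ε → ∃ n, ρ x (a n) < ε := by
    intro x ε hε
    obtain ⟨n, hn⟩ := ha.exists_dist_lt x (show (0:ℝ) < ε / C by positivity)
    refine ⟨n, (hub x (a n)).trans_lt ?_⟩
    calc C * dist x (a n) < C * (ε / C) := by gcongr
      _ = ε := by field_simp
  set T : ℕ → ℝ := Tval ρ a with hT
  set v : S → ℕ → ℝ := vval ρ a with hv
  have vpos : ∀ x m, condP ρ a x m → v x m = T m.unpair.1 := by
    intro x m h
    show vval ρ a x m = _
    rw [vval, if_pos h]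
  have vneg : ∀ x m, ¬ condP ρ a x m → v x m = 0 := by
    intro x m h
    show vval ρ a x m = _
    rw [vval, if_neg h]
  have vnonneg : ∀ x m, 0 ≤ v x m := by
    intro x m
    by_cases h : condP ρ a x m
    · rw [vpos x m h, hT]; exact h.1.le
    · rw [vneg x m h]
  have vle : ∀ x y m, v x m - v y m ≤ ρ x y := by
    intro x y m
    by_cases hx : condP ρ a x m
    · by_cases hy : condP ρ a y m
      · rw [vpos x m hx, vpos y m hy, sub_self]; exact hnonneg x y
      · have hle : Tval ρ a m.unpair.1 ≤ ρ x y := by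
          by_contra hlt
          push_neg at hlt
          obtain ⟨h0, h1, h2, h3⟩ := hx
          refine hy ⟨h0, h1, ?_, ?_⟩
          · calc ρ y (a m.unpair.2) ≤ max (ρ y x) (ρ x (a m.unpair.2)) := hstrong _ _ _
              _ < Tval ρ a m.unpair.1 := max_lt (by rw [← hsymm x y]; exact hlt) h2
          · intro j hj hcon
            exact h3 j hj ((hstrong x y (a j)).trans_lt (max_lt hlt hcon))
        rw [vpos x m hx, vneg y m hy, sub_zero, hT]
        exact hle
    · rw [vneg x m hx]
      have h1 := vnonneg y m
      have h2 := hnonneg x y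
      linarith
  have habs : ∀ x y m, |v x m - v y m| ≤ ρ x y := by
    intro x y m
    rw [abs_sub_le_iff]
    exact ⟨vle x y m, by rw [hsymm x y]; exact vle y x m⟩
  -- finiteness of large coordinates
  have hfin : ∀ (x : S) (ε : ℝ), 0 < ε → {m : ℕ | ε ≤ |v x m|}.Finite := by
    intro x ε hε
    obtain ⟨s, hsfin, hscov⟩ :=
      (Metric.totallyBounded_iff.mp (isCompact_univ : IsCompact (Set.univ : Set S)).totallyBounded) (ε / (2 * C)) (by positivity)
    have hVfin : {t : ℝ | ε ≤ t ∧ ∃ u w : S, ρ u w = t}.Finite := by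
      refine (Set.Finite.image2 ρ hsfin hsfin).subset ?_
      rintro t ⟨hεt, u, w, rfl⟩
      have hcent : ∀ z : S, ∃ c ∈ s, ρ z c < ε / 2 := by
        intro z
        have := hscov (Set.mem_univ z)
        simp only [Set.mem_iUnion, Metric.mem_ball] at this
        obtain ⟨c, hcs, hc⟩ := this
        refine ⟨c, hcs, (hub z c).trans_lt ?_⟩
        calc C * dist z c < C * (ε / (2 * C)) := by gcongr
          _ = ε / 2 := by field_simp
      obtain ⟨c1, hc1s, hc1⟩ := hcent u
      obtain ⟨c2, hc2s, hc2⟩ := hcent w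
      have hr1 : ρ u c1 < ρ u w := hc1.trans_le (by linarith)
      have e1 : ρ c1 w = ρ u w := hiso u c1 w hr1
      have hr2 : ρ w c2 < ρ w c1 := by
        rw [hsymm w c1, e1]
        exact hc2.trans_le (by linarith)
      have e2 : ρ c2 c1 = ρ w c1 := hiso w c2 c1 hr2
      exact ⟨c1, hc1s, c2, hc2s, by rw [hsymm c1 c2, e2, hsymm w c1, e1]⟩
    have key : ∀ m ∈ {m : ℕ | ε ≤ |v x m|}, condP ρ a x m ∧ v x m = T m.unpair.1 := by
      intro m hm
      by_cases h : condP ρ a x m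
      · exact ⟨h, vpos x m h⟩
      · exfalso
        rw [Set.mem_setOf_eq, vneg x m h, abs_zero] at hm
        linarith
    refine Set.Finite.of_finite_image (f := fun m => T m.unpair.1) (hVfin.subset ?_) ?_
    · rintro t ⟨m, hm, rfl⟩
      obtain ⟨hc, hval⟩ := key m hm
      have h1 : ε ≤ T m.unpair.1 := by
        rw [← hval, ← abs_of_nonneg (vnonneg x m)]
        exact hm
      exact ⟨h1, a m.unpair.1.unpair.1, a m.unpair.1.unpair.2, rfl⟩
    · intro m hm m' hm' heq
      obtain ⟨hcm, _⟩ := key m hm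
      obtain ⟨hcm', _⟩ := key m' hm'
      simp only at heq
      have hp : m.unpair.1 = m'.unpair.1 := by
        rcases lt_trichotomy m.unpair.1 m'.unpair.1 with h | h | h
        · exact absurd heq (hcm'.2.1 _ h)
        · exact h
        · exact absurd heq.symm (hcm.2.1 _ h)
      have ht : Tval ρ a m.unpair.1 = Tval ρ a m'.unpair.1 := by rw [hp]
      have hn : m.unpair.2 = m'.unpair.2 := by
        rcases lt_trichotomy m.unpair.2 m'.unpair.2 with h | h | h
        · exact absurd (ht ▸ hcm.2.2.1) (hcm'.2.2.2 _ h)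
        · exact h
        · exact absurd (ht ▸ hcm'.2.2.1) (hcm.2.2.2 _ h)
      have := Nat.pair_unpair m
      rw [← Nat.pair_unpair m, ← Nat.pair_unpair m', hp, hn]
  have hzero : ∀ x : S, Tendsto (v x) (cocompact ℕ) (𝓝 0) := by
    intro x
    rw [cocompact_eq_cofinite, Metric.tendsto_nhds]
    intro ε hε
    rw [eventually_cofinite]
    refine (hfin x ε hε).subset ?_
    intro m hm
    simp only [Real.dist_eq, sub_zero, not_lt, Set.mem_setOf_eq] at hm ⊢
    exact hm
  set g : S → ZeroAtInftyContinuousMap ℕ ℝ :=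
    fun x => ⟨⟨v x, continuous_of_discreteTopology⟩, hzero x⟩ with hg
  have hcoe : ∀ (x : S) (m : ℕ), (g x).toBCF m = v x m := fun x m => rfl
  refine ⟨g, fun x y => le_antisymm ?_ ?_⟩
  · rw [← ZeroAtInftyContinuousMap.dist_toBCF_eq_dist]
    refine (BoundedContinuousFunction.dist_le (hnonneg x y)).mpr fun m => ?_
    rw [hcoe, hcoe, Real.dist_eq]
    exact habs x y m
  · by_cases hxy : x = y
    · subst hxy
      rw [hself]
      exact dist_nonneg
    · have hc : 0 < ρ x y := hpos x y hxy
      obtain ⟨k, hk⟩ := hdense x (ρ x y) hc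
      obtain ⟨l, hl⟩ := hdense y (ρ x y) hc
      have hky : ρ (a k) y = ρ x y := hiso x (a k) y hk
      have hkl : ρ (a l) (a k) = ρ x y := by
        have h1 : ρ y (a l) < ρ y (a k) := by
          rw [hsymm y (a k), hky]; exact hl
        rw [hiso y (a l) (a k) h1, hsymm y (a k), hky]
      have hex : ∃ p : ℕ, Tval ρ a p = ρ x y :=
        ⟨Nat.pair l k, by simp only [Tval, Nat.unpair_pair]; exact hkl⟩
      have hexn : ∃ n : ℕ, ρ x (a n) < ρ x y := ⟨k, hk⟩
      set p := Nat.find hex with hpdef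
      set n := Nat.find hexn with hndef
      set m := Nat.pair p n with hmdef
      have hum1 : m.unpair.1 = p := by rw [hmdef, Nat.unpair_pair]
      have hum2 : m.unpair.2 = n := by rw [hmdef, Nat.unpair_pair]
      have hTp : Tval ρ a p = ρ x y := Nat.find_spec hex
      have hcx : condP ρ a x m := by
        refine ⟨?_, ?_, ?_, ?_⟩
        · rw [hum1, hTp]; exact hc
        · intro q hq
          rw [hum1] at hq ⊢
          rw [hTp]
          exact Nat.find_min hex hq
        · rw [hum1, hum2, hTp]
          exact Nat.find_spec hexn
        · intro j hj
          rw [hum2] at hj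
          rw [hum1, hTp]
          exact Nat.find_min hexn hj
      have hvx : v x m = ρ x y := by
        rw [vpos x m hcx, hum1, hT, hTp]
      have hvy : v y m = 0 := by
        apply vneg
        intro hcy
        have h1 : ρ y (a m.unpair.2) < Tval ρ a m.unpair.1 := hcy.2.2.1
        rw [hum1, hum2, hTp] at h1
        have h2 : ρ (a n) y = ρ x y := hiso x (a n) y (Nat.find_spec hexn)
        rw [hsymm y (a n), h2] at h1
        exact lt_irrefl _ h1
      calc ρ x y = dist (v x m) (v y m) := by
            rw [hvx, hvy, Real.dist_eq, sub_zero, abs_of_pos hc]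
        _ ≤ dist (g x).toBCF (g y).toBCF := by
            have := BoundedContinuousFunction.dist_coe_le_dist (f := (g x).toBCF)
              (g := (g y).toBCF) m
            rwa [hcoe, hcoe] at this
        _ = dist (g x) (g y) := ZeroAtInftyContinuousMap.dist_toBCF_eq_dist

end Aux

/-- For `D ≥ 1`: if a compact metric space `S` embeds with distortion `D` into some
ultrametric space, then `S` embeds with distortion `D` into `c₀`. -/
theorem embeds_distortion_ultrametric_implies_embeds_distortion_c0
    (D : ℝ) (hD : 1 ≤ D)
    (S : Type*) [MetricSpace S] [CompactSpace S]
    (h : ∃ (U : Type) (_ : MetricSpace U) (_ : IsUltrametricDist U)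
      (f : S → U) (r : ℝ), 0 < r ∧ ∀ x y : S,
        r * dist x y ≤ dist (f x) (f y) ∧ dist (f x) (f y) ≤ D * r * dist x y) :
    ∃ (f : S → ZeroAtInftyContinuousMap ℕ ℝ) (r : ℝ), 0 < r ∧
      ∀ x y : S,
        r * dist x y ≤ dist (f x) (f y) ∧ dist (f x) (f y) ≤ D * r * dist x y := by
  obtain ⟨U, _, _, f, r, hr, hf⟩ := h
  cases isEmpty_or_nonempty S with
  | inl hemp =>
    exact ⟨fun x => isEmptyElim x, 1, one_pos, fun x => isEmptyElim x⟩
  | inr hne =>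
    have hDr : 0 < D * r := mul_pos (lt_of_lt_of_le one_pos hD) hr
    obtain ⟨g, hg⟩ := ultra_embed_c0 S (fun x y => dist (f x) (f y))
      (fun x y => dist_comm _ _) (fun x => dist_self _)
      (fun x y z => IsUltrametricDist.dist_triangle_max _ _ _)
      (D * r) hDr (fun x y => (hf x y).2)
      (fun x y hxy => lt_of_lt_of_le (mul_pos hr (dist_pos.mpr hxy)) (hf x y).1)
    refine ⟨g, r, hr, fun x y => ?_⟩
    rw [hg x y]
    exact hf x y
end
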